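/- arXiv:1110.4490 — 9 statements merged into one kernel-verified Lean document; each statement's English description precedes it below -/
import Mathlib

section
/- Let K be a field of characteristic zero, let n ≥ 1, let a, b ∈ K and let α ∈ ℕ^n. Then the polynomial function P : K^n → K defined by P(x) = a·∏_{i=1}^n (x_i + b)^{α_i} − b is bisymmetric. -/
/-- A function `f : S^n → S` is bisymmetric if for every `n × n` matrix `X` over `S`,
applying `f` to the rows and then to the results equals applying `f` to the columns
and then to the results. -/
def Bisym {S : Type*} {n : ℕ} (f : (Fin n → S) → S) : Prop :=
  ∀ X : Fin n → Fin n → S,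
    f (fun i => f (X i)) = f (fun j => f (fun i => X i j))

/-- Over a field of characteristic zero, `P(x) = a·∏ (x_i + b)^{α_i} − b` is bisymmetric. -/
theorem bisym_of_translated_monomial
    {K : Type*} [Field K] [CharZero K] {n : ℕ} (hn : 1 ≤ n)
    (a b : K) (α : Fin n → ℕ) :
    Bisym (fun x : Fin n → K => a * (∏ i, (x i + b) ^ α i) - b) := by
  intro X
  simp only [sub_add_cancel, mul_pow, ← Finset.prod_pow, ← pow_mul,
    Finset.prod_mul_distrib, Finset.prod_pow_eq_pow_sum]
  rw [Finset.prod_comm]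
  simp only [Nat.mul_comm]
end

section
/- Let K be a field of characteristic zero and let P : K^n → K be a bisymmetric polynomial function of degree p ≥ 2. Then the homogeneous component P_p of P of degree p is itself a bisymmetric function. -/
open Polynomial MvPolynomial

theorem Polynomial.coeff_prod_sum_of_natDegree_le {R ι : Type*} [CommSemiring R] (s : Finset ι)
    (f : ι → R[X]) (m : ι → ℕ) (h : ∀ i ∈ s, (f i).natDegree ≤ m i) :
    (∏ i ∈ s, f i).coeff (∑ i ∈ s, m i) = ∏ i ∈ s, (f i).coeff (m i) := by
  induction s using Finset.cons_induction with
  | empty => simp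
  | cons a s _ ih =>
    have hs : ∀ i ∈ s, (f i).natDegree ≤ m i := fun i hi => h i (Finset.mem_cons_of_mem hi)
    rw [Finset.prod_cons, Finset.sum_cons, Finset.prod_cons, ← ih hs,
      coeff_mul_add_eq_of_natDegree_le (h a (Finset.mem_cons_self a s))
        ((natDegree_prod_le s f).trans (Finset.sum_le_sum hs))]

namespace MvPolynomial

variable {σ R : Type*}

section CommSemiring

variable [CommSemiring R]

theorem eval_aeval (g : σ → R[X]) (t : R) (P : MvPolynomial σ R) :
    (aeval g P).eval t = eval (fun i => (g i).eval t) P := by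
  simpa using comp_aeval_apply (Polynomial.aeval t) P (f := g)

section SubstitutionOfBoundedDegree

variable {q : ℕ} {Q : σ → R[X]}

theorem natDegree_aeval_monomial_le (hQ : ∀ i, (Q i).natDegree ≤ q) (d : σ →₀ ℕ) (a : R) :
    (aeval Q (monomial d a)).natDegree ≤ d.degree * q := by
  rw [aeval_monomial, Finsupp.degree_apply, Finset.sum_mul]
  refine natDegree_C_mul_le _ _ |>.trans <| (natDegree_prod_le _ _).trans <|
    Finset.sum_le_sum fun i _ => natDegree_pow_le.trans ?_
  exact Nat.mul_le_mul_left _ (hQ i)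

theorem coeff_aeval_monomial_degree_mul (hQ : ∀ i, (Q i).natDegree ≤ q) (d : σ →₀ ℕ) (a : R) :
    (aeval Q (monomial d a)).coeff (d.degree * q) =
      eval (fun i => (Q i).coeff q) (monomial d a) := by
  rw [aeval_monomial, eval_monomial, Polynomial.algebraMap_eq, Polynomial.coeff_C_mul,
    Finsupp.prod, Finsupp.prod, Finsupp.degree_apply, Finset.sum_mul,
    coeff_prod_sum_of_natDegree_le _ _ _ fun i _ => natDegree_pow_le.trans
      (Nat.mul_le_mul_left _ (hQ i))]
  simp only [coeff_pow_of_natDegree_le (hQ _)]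

theorem coeff_aeval_mul_of_natDegree_le {p : ℕ} (hq : 0 < q) (hQ : ∀ i, (Q i).natDegree ≤ q)
    {P : MvPolynomial σ R} (hP : P.totalDegree ≤ p) :
    (aeval Q P).coeff (p * q) = eval (fun i => (Q i).coeff q) (homogeneousComponent p P) := by
  conv_lhs => rw [P.as_sum]
  conv_rhs => rw [P.as_sum]
  simp only [map_sum, finsetSum_coeff]
  refine Finset.sum_congr rfl fun d hd => ?_
  rw [homogeneousComponent_of_mem (isHomogeneous_monomial _ rfl)]
  have hdp : d.degree ≤ p := (le_totalDegree hd).trans hP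
  obtain hdp | hdp := hdp.eq_or_lt
  · rw [if_pos hdp.symm, ← hdp, coeff_aeval_monomial_degree_mul hQ]
  · rw [if_neg hdp.ne', map_zero]
    exact coeff_eq_zero_of_natDegree_lt <| (natDegree_aeval_monomial_le hQ d _).trans_lt <|
      Nat.mul_lt_mul_of_pos_right hdp hq

end SubstitutionOfBoundedDegree

noncomputable def restrictLine (P : MvPolynomial σ R) (x : σ → R) : R[X] :=
  aeval (fun i => Polynomial.C (x i) * Polynomial.X) P

variable (P : MvPolynomial σ R) (x : σ → R)

theorem eval_restrictLine (t : R) : (P.restrictLine x).eval t = eval (t • x) P := by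
  rw [restrictLine, eval_aeval]
  simp only [Polynomial.eval_mul, Polynomial.eval_C, Polynomial.eval_X, mul_comm _ t]
  rfl

theorem restrictLine_monomial (d : σ →₀ ℕ) (a : R) :
    (monomial d a).restrictLine x =
      Polynomial.C (eval x (monomial d a)) * Polynomial.X ^ d.degree := by
  rw [restrictLine, aeval_monomial, eval_monomial, Polynomial.algebraMap_eq, map_mul, mul_assoc,
    Finsupp.prod, Finsupp.prod, Finsupp.degree_apply, map_prod, ← Finset.prod_pow_eq_pow_sum,
    ← Finset.prod_mul_distrib]
  simp only [mul_pow, map_pow]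

theorem coeff_restrictLine (k : ℕ) :
    (P.restrictLine x).coeff k = eval x (homogeneousComponent k P) := by
  induction P using MvPolynomial.induction_on' with
  | add P₁ P₂ h₁ h₂ =>
    simp only [restrictLine, map_add, Polynomial.coeff_add] at *
    rw [h₁, h₂]
  | monomial d a =>
    rw [restrictLine_monomial, Polynomial.coeff_C_mul_X_pow,
      homogeneousComponent_of_mem (isHomogeneous_monomial _ rfl)]
    split_ifs <;> simp_all

theorem natDegree_restrictLine_le : (P.restrictLine x).natDegree ≤ P.totalDegree := by
  refine natDegree_le_iff_coeff_eq_zero.mpr fun k hk => ?_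
  rw [coeff_restrictLine, homogeneousComponent_eq_zero _ _ hk, map_zero]

end CommSemiring

theorem aeval_restrictLine_rows_eq_cols [CommRing R] [IsDomain R] [Infinite R] {n : ℕ}
    {P : MvPolynomial (Fin n) R} (hP : Bisym fun x => eval x P) (X : Fin n → Fin n → R) :
    aeval (fun i => P.restrictLine (X i)) P = aeval (fun j => P.restrictLine fun i => X i j) P :=
  Polynomial.funext fun t => by
    simp only [eval_aeval, eval_restrictLine]
    exact hP (t • X)

end MvPolynomial

/-- The top homogeneous component of a bisymmetric polynomial function of degree
`p ≥ 2` is bisymmetric. -/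
theorem bisym_top_homogeneousComponent
    {K : Type*} [Field K] [CharZero K] {n p : ℕ}
    (P : MvPolynomial (Fin n) K)
    (hbi : Bisym fun x : Fin n → K => MvPolynomial.eval x P)
    (hdeg : P.totalDegree = p) (hp : 2 ≤ p) :
    Bisym fun x : Fin n → K =>
      MvPolynomial.eval x (MvPolynomial.homogeneousComponent p P) := by
  intro X
  have hline : ∀ y : Fin n → K, (P.restrictLine y).natDegree ≤ p :=
    fun y => hdeg ▸ natDegree_restrictLine_le P y
  have htop := congrArg (Polynomial.coeff · (p * p)) (aeval_restrictLine_rows_eq_cols hbi X)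
  simpa only [coeff_aeval_mul_of_natDegree_le (by omega) (fun _ => hline _) hdeg.le,
    coeff_restrictLine] using htop
end

section
/- Let K be a field of characteristic zero and let H : K^n → K be a bisymmetric polynomial function of degree p ≥ 2 that is homogeneous (all its monomial terms have total degree p). Then H is a monomial function, i.e., H(x) = c·x_1^{γ_1} ⋯ x_n^{γ_n} for some c ∈ K \ {0} and γ ∈ ℕ^n with Σ_i γ_i = p. -/
private lemma base_inj : ∀ (n B : ℕ) (f g : Fin n → ℕ),
    (∀ i, f i < B) → (∀ i, g i < B) →
    (∑ i, f i * B ^ (i : ℕ)) = (∑ i, g i * B ^ (i : ℕ)) → f = g := by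
  intro n
  induction n with
  | zero => intro B f g _ _ _; funext i; exact i.elim0
  | succ n ih =>
    intro B f g hf hg hsum
    have hB : 0 < B := lt_of_le_of_lt (Nat.zero_le _) (hf 0)
    rw [Fin.sum_univ_succ, Fin.sum_univ_succ] at hsum
    have e1 : ∀ (u : Fin (n+1) → ℕ),
        (∑ i : Fin n, u i.succ * B ^ ((i.succ : Fin (n+1)) : ℕ)) =
          B * ∑ i : Fin n, u i.succ * B ^ (i : ℕ) := by
      intro u
      rw [Finset.mul_sum]
      apply Finset.sum_congr rfl
      intro i _
      rw [Fin.val_succ, pow_succ]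
      ring
    rw [e1 f, e1 g] at hsum
    simp only [Fin.val_zero, pow_zero, mul_one] at hsum
    have h0 : f 0 = g 0 := by
      have hmod := congrArg (· % B) hsum
      simpa [Nat.add_mul_mod_self_left, Nat.mod_eq_of_lt (hf 0), Nat.mod_eq_of_lt (hg 0)]
        using hmod
    have htail : (fun i : Fin n => f i.succ) = fun i : Fin n => g i.succ := by
      apply ih B _ _ (fun i => hf i.succ) (fun i => hg i.succ)
      have : B * (∑ i : Fin n, f i.succ * B ^ (i : ℕ)) =
          B * (∑ i : Fin n, g i.succ * B ^ (i : ℕ)) := by omega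
      exact Nat.eq_of_mul_eq_mul_left hB this
    funext i
    refine Fin.cases h0 (fun j => ?_) i
    exact congrFun htail j

open Polynomial in
private lemma onevar_card {K : Type*} [Field K] [CharZero K] {p : ℕ} (hp : 2 ≤ p)
    {h : K[X]} (hh : h ≠ 0) {D e : K} (hD : D ≠ 0)
    (hrel : C D * expand K p h = C e * h ^ p) : h.support.card = 1 := by
  have hp0 : 0 < p := by omega
  obtain ⟨p', rfl⟩ : ∃ p', p = p' + 1 := ⟨p - 1, by omega⟩
  have hp'0 : 0 < p' := by omega
  by_contra hcard
  have h1 : h.support.card ≠ 0 := fun h0 => hh (Polynomial.card_support_eq_zero.mp h0)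
  have h2 : 2 ≤ h.support.card := by omega
  set m := h.natDegree with hm
  set c := h.leadingCoeff with hc
  set r := h.eraseLead with hrdef
  set k := r.natDegree with hk
  have hkm : k < m := Polynomial.eraseLead_natDegree_lt h2
  have hr0 : r ≠ 0 := Polynomial.eraseLead_ne_zero h2
  have hc0 : c ≠ 0 := Polynomial.leadingCoeff_ne_zero.mpr hh
  have hrk : r.coeff k ≠ 0 := Polynomial.leadingCoeff_ne_zero.mpr hr0
  set N := p' * m + k with hN
  have hNlt : N < (p' + 1) * m := by
    calc N = p' * m + k := hN
      _ < p' * m + m := Nat.add_lt_add_left hkm _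
      _ = (p' + 1) * m := by ring
  -- coefficient of h^p at N
  have heq : h = r + Polynomial.monomial m c :=
    (Polynomial.eraseLead_add_monomial_natDegree_leadingCoeff h).symm
  have hpowcoeff : (h ^ (p' + 1)).coeff N = r.coeff k * c ^ p' * ((p' + 1 : ℕ) : K) := by
    rw [heq, add_pow, Polynomial.finset_sum_coeff]
    rw [Finset.sum_eq_single 1]
    · rw [pow_one, Polynomial.monomial_pow, Nat.choose_one_right]
      have hcast : (((p' + 1 : ℕ)) : K[X]) = Polynomial.C ((p' + 1 : ℕ) : K) := by simp
      rw [hcast, Polynomial.coeff_mul_C]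
      have hN' : N = k + m * (p' + 1 - 1) := by rw [hN, Nat.add_sub_cancel]; ring
      rw [hN', Polynomial.coeff_mul_monomial, Nat.add_sub_cancel]
    · intro j hj hj1
      rw [Finset.mem_range] at hj
      rcases Nat.eq_zero_or_pos j with rfl | hjpos
      · simp only [pow_zero, one_mul, Polynomial.monomial_pow, Nat.choose_zero_right,
          Nat.cast_one, mul_one, Nat.sub_zero]
        rw [Polynomial.coeff_monomial, if_neg]
        intro hcontra
        rw [mul_comm] at hcontra
        exact Nat.lt_irrefl N (hcontra ▸ hNlt)
      · obtain ⟨j', rfl⟩ : ∃ j', j = j' + 2 := ⟨j - 2, by omega⟩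
        apply Polynomial.coeff_eq_zero_of_natDegree_lt
        have hsub : p' + 1 - (j' + 2) = p' - (j' + 1) := by omega
        obtain ⟨s, hs⟩ : ∃ s, p' = j' + 1 + s := ⟨p' - (j' + 1), by omega⟩
        calc (r ^ (j' + 2) * Polynomial.monomial m c ^ (p' + 1 - (j' + 2))
                * (((p' + 1).choose (j' + 2) : ℕ) : K[X])).natDegree
            ≤ (r ^ (j' + 2) * Polynomial.monomial m c ^ (p' + 1 - (j' + 2))).natDegree
              + ((((p' + 1).choose (j' + 2) : ℕ) : K[X])).natDegree := Polynomial.natDegree_mul_le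
          _ ≤ (r ^ (j' + 2)).natDegree
              + (Polynomial.monomial m c ^ (p' + 1 - (j' + 2))).natDegree + 0 := by
              gcongr
              · exact Polynomial.natDegree_mul_le
              · simp [Polynomial.natDegree_natCast]
          _ ≤ (j' + 2) * k + m * (p' + 1 - (j' + 2)) + 0 := by
              gcongr
              · exact Polynomial.natDegree_pow_le
              · rw [Polynomial.monomial_pow]
                exact Polynomial.natDegree_monomial_le _
          _ = (j' + 2) * k + m * s := by
              have hss : p' + 1 - (j' + 2) = s := by omega
              rw [hss, Nat.add_zero]
          _ = ((j' + 1) * k + m * s) + k := by ring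
          _ < ((j' + 1) * m + m * s) + k := by
              have key : (j' + 1) * k < (j' + 1) * m :=
                mul_lt_mul_of_pos_left hkm (by omega)
              exact Nat.add_lt_add_right (Nat.add_lt_add_right key (m * s)) k
          _ = (j' + 1 + s) * m + k := by ring
          _ = N := by rw [hN, hs]
    · intro hmem
      exact absurd (Finset.mem_range.mpr (by omega)) hmem
  -- coefficient of expand at N is zero
  have hexp : (Polynomial.expand K (p' + 1) h).coeff N = 0 := by
    rw [Polynomial.coeff_expand hp0]
    split_ifs with hdvd
    · by_contra hne
      have hqmem : N / (p' + 1) ∈ h.support := Polynomial.mem_support_iff.mpr hne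
      have hNq : (p' + 1) * (N / (p' + 1)) = N := Nat.mul_div_cancel' hdvd
      have hqm : N / (p' + 1) < m := by
        have h' : (p' + 1) * (N / (p' + 1)) < (p' + 1) * m := by rw [hNq]; exact hNlt
        exact Nat.lt_of_mul_lt_mul_left h'
      have hqr : N / (p' + 1) ∈ r.support := by
        rw [hrdef, Polynomial.eraseLead_support, Finset.mem_erase]
        exact ⟨by omega, hqmem⟩
      have hqk : N / (p' + 1) ≤ k := Polynomial.le_natDegree_of_mem_supp _ hqr
      have hle : N ≤ (p' + 1) * k := by
        calc N = (p' + 1) * (N / (p' + 1)) := hNq.symm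
          _ ≤ (p' + 1) * k := Nat.mul_le_mul_left _ hqk
      have hlt : (p' + 1) * k < N := by
        have key : p' * k < p' * m := mul_lt_mul_of_pos_left hkm hp'0
        calc (p' + 1) * k = p' * k + k := by ring
          _ < p' * m + k := Nat.add_lt_add_right key k
          _ = N := hN.symm
      exact Nat.lt_irrefl N (lt_of_le_of_lt hle hlt)
    · rfl
  have he0 : e ≠ 0 := by
    intro he
    rw [he] at hrel
    simp only [Polynomial.C_0, zero_mul] at hrel
    rcases mul_eq_zero.mp hrel with h' | h'
    · exact hD (by simpa using h')
    · exact hh ((Polynomial.expand_eq_zero hp0).mp h')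
  have hcoeffeq := congrArg (fun q => Polynomial.coeff q N) hrel
  simp only [Polynomial.coeff_C_mul, hexp, mul_zero, hpowcoeff] at hcoeffeq
  have hpK : (((p' + 1 : ℕ)) : K) ≠ 0 := Nat.cast_ne_zero.mpr (by omega)
  have hX : r.coeff k * c ^ p' * ((p' + 1 : ℕ) : K) ≠ 0 :=
    mul_ne_zero (mul_ne_zero hrk (pow_ne_zero _ hc0)) hpK
  exact (mul_ne_zero he0 hX) hcoeffeq.symm

private lemma pow_prod_aux {M : Type*} [CommMonoid M] {n : ℕ} (b : M) (B : ℕ) (d : Fin n → ℕ) :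
    ∏ i : Fin n, (b ^ (B ^ (i : ℕ))) ^ d i = b ^ (∑ i : Fin n, d i * B ^ (i : ℕ)) := by
  rw [← Finset.prod_pow_eq_pow_sum]
  apply Finset.prod_congr rfl
  intro i _
  rw [← pow_mul, mul_comm]

/-- A bisymmetric homogeneous polynomial function of degree `p ≥ 2` is a monomial
function. -/
theorem bisym_homogeneous_is_monomial
    {K : Type*} [Field K] [CharZero K] {n p : ℕ}
    (H : MvPolynomial (Fin n) K)
    (hbi : Bisym fun x : Fin n → K => MvPolynomial.eval x H)
    (hhom : H.IsHomogeneous p) (hH : H ≠ 0) (hp : 2 ≤ p) :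
    ∃ c : K, c ≠ 0 ∧ ∃ γ : Fin n → ℕ, (∑ i, γ i = p) ∧
      ∀ x : Fin n → K, MvPolynomial.eval x H = c * ∏ i, x i ^ γ i := by
  classical
  -- degree facts
  have hdeg : ∀ d ∈ H.support, ∑ i, d i = p := by
    intro d hd
    have h1 : Finsupp.degree d = p := by
      have h2 := hhom (MvPolynomial.mem_support_iff.mp hd)
      rw [Finsupp.degree_eq_weight_one]
      exact h2
    have h2 : Finsupp.degree d = ∑ i, d i :=
      Finset.sum_subset (Finset.subset_univ _)
        (fun i _ hi => Finsupp.notMem_support_iff.mp hi)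
    rw [← h2, h1]
  have hentry : ∀ d ∈ H.support, ∀ i, (d : Fin n → ℕ) i < p + 1 := by
    intro d hd i
    have h1 : d i ≤ ∑ j, d j :=
      Finset.single_le_sum (fun j _ => Nat.zero_le (d j)) (Finset.mem_univ i)
    rw [hdeg d hd] at h1
    omega
  -- injectivity of the weight on the support
  set w : (Fin n →₀ ℕ) → ℕ := fun d => ∑ i, d i * (p+1) ^ (i : ℕ) with hw
  have winj : ∀ d ∈ H.support, ∀ d' ∈ H.support, w d = w d' → d = d' := by
    intro d hd d' hd' hww
    have := base_inj n (p+1) (fun i => d i) (fun i => d' i)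
      (hentry d hd) (hentry d' hd') hww
    exact Finsupp.ext (fun i => congrFun this i)
  -- scaling identity
  have hscale : ∀ (t : K) (v : Fin n → K),
      MvPolynomial.eval (fun j => t * v j) H = t ^ p * MvPolynomial.eval v H := by
    intro t v
    rw [MvPolynomial.eval_eq', MvPolynomial.eval_eq', Finset.mul_sum]
    apply Finset.sum_congr rfl
    intro d hd
    calc MvPolynomial.coeff d H * ∏ i, (t * v i) ^ d i
        = MvPolynomial.coeff d H * ((∏ i, t ^ d i) * ∏ i, v i ^ d i) := by
          rw [← Finset.prod_mul_distrib]
          simp_rw [mul_pow]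
      _ = t ^ p * (MvPolynomial.coeff d H * ∏ i, v i ^ d i) := by
          rw [Finset.prod_pow_eq_pow_sum, hdeg d hd]
          ring
  have hscale' : ∀ (t : K) (v : Fin n → K),
      MvPolynomial.eval (fun j => v j * t) H = t ^ p * MvPolynomial.eval v H := by
    intro t v
    rw [show (fun j => v j * t) = fun j => t * v j from funext fun j => mul_comm _ _]
    exact hscale t v
  -- the key functional identity
  have key : ∀ x y : Fin n → K,
      (MvPolynomial.eval y H) ^ p * MvPolynomial.eval (fun i => x i ^ p) H =
      (MvPolynomial.eval x H) ^ p * MvPolynomial.eval (fun i => y i ^ p) H := by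
    intro x y
    have hb := hbi (fun i j => x i * y j)
    simp only [] at hb
    have l1 : ∀ i, MvPolynomial.eval (fun j => x i * y j) H
        = x i ^ p * MvPolynomial.eval y H := fun i => hscale (x i) y
    have l2 : ∀ j, MvPolynomial.eval (fun i => x i * y j) H
        = y j ^ p * MvPolynomial.eval x H := by
      intro j
      rw [show (fun i => x i * y j) = fun i => x i * (y j) from rfl]
      exact hscale' (y j) x
    simp only [l1, l2] at hb
    calc (MvPolynomial.eval y H) ^ p * MvPolynomial.eval (fun i => x i ^ p) H
        = MvPolynomial.eval (fun i => x i ^ p * MvPolynomial.eval y H) H :=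
          (hscale' (MvPolynomial.eval y H) (fun i => x i ^ p)).symm
      _ = MvPolynomial.eval (fun j => y j ^ p * MvPolynomial.eval x H) H := hb
      _ = (MvPolynomial.eval x H) ^ p * MvPolynomial.eval (fun i => y i ^ p) H :=
          hscale' (MvPolynomial.eval x H) (fun i => y i ^ p)
  -- choose a point where H doesn't vanish
  obtain ⟨a, ha⟩ : ∃ a : Fin n → K, MvPolynomial.eval a H ≠ 0 := by
    by_contra hcon
    push_neg at hcon
    exact hH (MvPolynomial.funext (fun x => by rw [hcon x, map_zero]))
  -- the one-variable polynomial
  set h : Polynomial K :=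
    MvPolynomial.aeval (fun i : Fin n => (Polynomial.X : Polynomial K) ^ ((p+1) ^ (i : ℕ))) H
    with hhdef
  have hsum_repr : h = ∑ d ∈ H.support,
      Polynomial.C (MvPolynomial.coeff d H) * Polynomial.X ^ (w d) := by
    rw [hhdef]
    conv_lhs => rw [MvPolynomial.as_sum H]
    rw [map_sum]
    apply Finset.sum_congr rfl
    intro d _
    rw [MvPolynomial.aeval_monomial, Polynomial.algebraMap_eq]
    congr 1
    rw [Finsupp.prod_pow]
    exact pow_prod_aux Polynomial.X (p+1) (fun i => d i)
  have hcoeffh : ∀ d0 ∈ H.support, h.coeff (w d0) = MvPolynomial.coeff d0 H := by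
    intro d0 hd0
    rw [hsum_repr, Polynomial.finset_sum_coeff]
    rw [Finset.sum_eq_single d0]
    · rw [Polynomial.coeff_C_mul, Polynomial.coeff_X_pow, if_pos rfl, mul_one]
    · intro d hd hne
      rw [Polynomial.coeff_C_mul, Polynomial.coeff_X_pow, if_neg, mul_zero]
      intro hww
      exact hne (winj d hd d0 hd0 hww.symm)
    · intro h'
      exact absurd hd0 h'
  obtain ⟨d0, hd0⟩ := MvPolynomial.support_nonempty.mpr hH
  have hh0 : h ≠ 0 := by
    intro h0
    have := hcoeffh d0 hd0
    rw [h0, Polynomial.coeff_zero] at this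
    exact MvPolynomial.mem_support_iff.mp hd0 this.symm
  -- evaluation of h
  have heval : ∀ t : K, Polynomial.eval t h
      = MvPolynomial.eval (fun i : Fin n => t ^ ((p+1) ^ (i : ℕ))) H := by
    intro t
    rw [hsum_repr, Polynomial.eval_finset_sum, MvPolynomial.eval_eq']
    apply Finset.sum_congr rfl
    intro d _
    simp only [Polynomial.eval_mul, Polynomial.eval_C, Polynomial.eval_pow, Polynomial.eval_X]
    rw [pow_prod_aux t (p+1) (fun i => d i)]
  -- the polynomial identity in one variable
  have hpolyid : Polynomial.C ((MvPolynomial.eval a H) ^ p) * Polynomial.expand K p h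
      = Polynomial.C (MvPolynomial.eval (fun i => a i ^ p) H) * h ^ p := by
    apply Polynomial.funext
    intro t
    rw [Polynomial.eval_mul, Polynomial.eval_C, Polynomial.expand_eval,
        Polynomial.eval_mul, Polynomial.eval_C, Polynomial.eval_pow, heval, heval]
    have hfun : (fun i : Fin n => (t ^ p) ^ ((p+1) ^ (i : ℕ)))
        = fun i : Fin n => (t ^ ((p+1) ^ (i : ℕ))) ^ p := by
      funext i
      rw [← pow_mul, ← pow_mul, mul_comm]
    rw [hfun]
    rw [mul_comm (MvPolynomial.eval (fun i => a i ^ p) H)]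
    exact key (fun i : Fin n => t ^ ((p+1) ^ (i : ℕ))) a
  have hcards : h.support.card = 1 :=
    onevar_card hp hh0 (pow_ne_zero p ha) hpolyid
  -- the support of H is a singleton
  have hsingle : ∀ d ∈ H.support, d = d0 := by
    intro d hd
    have h1 : w d ∈ h.support := Polynomial.mem_support_iff.mpr
      (by rw [hcoeffh d hd]; exact MvPolynomial.mem_support_iff.mp hd)
    have h2 : w d0 ∈ h.support := Polynomial.mem_support_iff.mpr
      (by rw [hcoeffh d0 hd0]; exact MvPolynomial.mem_support_iff.mp hd0)
    have h3 : w d = w d0 := Finset.card_le_one.mp (le_of_eq hcards) _ h1 _ h2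
    exact winj d hd d0 hd0 h3
  have hsupp : H.support = {d0} :=
    Finset.eq_singleton_iff_unique_mem.mpr ⟨hd0, hsingle⟩
  have hHeq : H = MvPolynomial.monomial d0 (MvPolynomial.coeff d0 H) := by
    conv_lhs => rw [MvPolynomial.as_sum H, hsupp]
    rw [Finset.sum_singleton]
  refine ⟨MvPolynomial.coeff d0 H, MvPolynomial.mem_support_iff.mp hd0,
    fun i => d0 i, hdeg d0 hd0, fun x => ?_⟩
  conv_lhs => rw [hHeq]
  rw [MvPolynomial.eval_monomial, Finsupp.prod_pow]
end

section
/- Let K be a field of characteristic zero and let H : K^n → K be a bisymmetric polynomial function that is homogeneous of degree p. Then for all x, y ∈ K^n, H(x)^p · H(y_1^p, …, y_n^p) = H(y)^p · H(x_1^p, …, x_n^p). -/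
open MvPolynomial in
lemma eval_mul_homog {K : Type*} [CommSemiring K] {σ : Type*} {p : ℕ}
    (H : MvPolynomial σ K) (hhom : H.IsHomogeneous p) (c : K) (x : σ → K) :
    MvPolynomial.eval (fun i => c * x i) H = c ^ p * MvPolynomial.eval x H := by
  rw [eval_eq, eval_eq, Finset.mul_sum]
  refine Finset.sum_congr rfl fun d hd => ?_
  have hdeg : ∑ i ∈ d.support, d i = p := by
    have := hhom (mem_support_iff.mp hd)
    simpa [Finsupp.weight, Finsupp.linearCombination, Finsupp.sum] using this
  calc H.coeff d * ∏ i ∈ d.support, (c * x i) ^ d i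
      = H.coeff d * ((∏ i ∈ d.support, c ^ d i) * ∏ i ∈ d.support, x i ^ d i) := by
        rw [← Finset.prod_mul_distrib]; simp [mul_pow]
    _ = c ^ p * (H.coeff d * ∏ i ∈ d.support, x i ^ d i) := by
        rw [Finset.prod_pow_eq_pow_sum, hdeg]; ring

/-- For a bisymmetric homogeneous polynomial function `H` of degree `p`,
`H(x)^p · H(y^p) = H(y)^p · H(x^p)`. -/
theorem bisym_homogeneous_identity
    {K : Type*} [Field K] [CharZero K] {n p : ℕ}
    (H : MvPolynomial (Fin n) K)
    (hbi : Bisym fun x : Fin n → K => MvPolynomial.eval x H)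
    (hhom : H.IsHomogeneous p) :
    ∀ x y : Fin n → K,
      MvPolynomial.eval x H ^ p * MvPolynomial.eval (fun i => y i ^ p) H =
      MvPolynomial.eval y H ^ p * MvPolynomial.eval (fun i => x i ^ p) H := by
  intro x y
  have h := hbi (fun i j => x i * y j)
  simp only at h
  have hrow : (fun i => MvPolynomial.eval (fun j => x i * y j) H)
      = fun i => MvPolynomial.eval y H * x i ^ p := by
    funext i
    rw [eval_mul_homog H hhom]; ring
  have hcol : (fun j => MvPolynomial.eval (fun i => x i * y j) H)
      = fun j => MvPolynomial.eval x H * y j ^ p := by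
    funext j
    rw [show (fun i => x i * y j) = fun i => y j * x i from funext fun i => mul_comm _ _,
      eval_mul_homog H hhom]; ring
  rw [hrow, hcol, eval_mul_homog H hhom, eval_mul_homog H hhom] at h
  exact h.symm
end

section
/- Let K be a field of characteristic zero and let P : K^n → K be a bisymmetric polynomial function of degree p ≥ 2 whose homogeneous component P_p of degree p does not depend on the variable x_j (i.e., the formal partial derivative ∂_{x_j} P_p is the zero polynomial). Then P does not depend on x_j (i.e., ∂_{x_j} P = 0). -/
theorem Finsupp.card_toMultiset_eq_degree {σ : Type*} (s : σ →₀ ℕ) :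
    Multiset.card s.toMultiset = s.degree := by
  rw [Finsupp.card_toMultiset, Finsupp.degree_apply]
  rfl

namespace MvPolynomial

section CommSemiring

variable {R σ τ : Type*} [CommSemiring R]

theorem pderiv_aeval [Fintype σ] (g : σ → MvPolynomial τ R) (t : τ) (f : MvPolynomial σ R) :
    pderiv t (aeval g f) = ∑ i, aeval g (pderiv i f) * pderiv t (g i) := by
  classical
  induction f using MvPolynomial.induction_on with
  | C a => simp
  | add f f' hf hf' => simp only [map_add, hf, hf', add_mul, Finset.sum_add_distrib]
  | mul_X f i hf =>
    simp only [map_mul, aeval_X, pderiv_mul, map_add, add_mul, Finset.sum_add_distrib, hf,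
      Finset.sum_mul, pderiv_X, Pi.single_apply, apply_ite (aeval g), map_zero,
      mul_ite, mul_one, mul_zero, ite_mul, zero_mul, Finset.sum_ite_eq, Finset.mem_univ, if_true]
    congr 1
    exact Finset.sum_congr rfl fun _ _ => by ring

theorem homogeneousComponent_pderiv (n : ℕ) (i : σ) (f : MvPolynomial σ R) :
    homogeneousComponent n (pderiv i f) = pderiv i (homogeneousComponent (n + 1) f) := by
  ext d
  simp only [coeff_homogeneousComponent, coeff_pderiv, map_add, Finsupp.degree_single]
  split_ifs <;> simp_all

theorem totalDegree_pderiv_le (i : σ) (f : MvPolynomial σ R) :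
    (pderiv i f).totalDegree ≤ f.totalDegree - 1 := by
  refine Finset.sup_le fun d hd => ?_
  rw [mem_support_iff, coeff_pderiv] at hd
  have : (d + Finsupp.single i 1).degree ≤ f.totalDegree :=
    le_totalDegree (mem_support_iff.2 (left_ne_zero_of_mul hd))
  rw [map_add, Finsupp.degree_single] at this
  change d.degree ≤ _
  omega

theorem homogeneousComponent_totalDegree_ne_zero {f : MvPolynomial σ R} (hf : f ≠ 0) :
    homogeneousComponent f.totalDegree f ≠ 0 := by
  obtain ⟨d, hd, hdeg⟩ :=
    Finset.exists_max_image f.support Finsupp.degree (support_nonempty.2 hf)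
  have htop : d.degree = f.totalDegree := le_antisymm (le_totalDegree hd) (Finset.sup_le hdeg)
  intro h
  have := coeff_homogeneousComponent f.totalDegree f d
  rw [h, coeff_zero, if_pos htop] at this
  exact mem_support_iff.1 hd this.symm

theorem totalDegree_le_of_homogeneousComponent_eq_zero {f : MvPolynomial σ R} {n : ℕ}
    (hf : f.totalDegree ≤ n + 1) (h : homogeneousComponent (n + 1) f = 0) :
    f.totalDegree ≤ n := by
  refine Finset.sup_le fun d hd => ?_
  have hdeg : d.degree ≤ n + 1 := (le_totalDegree hd).trans hf
  change d.degree ≤ n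
  by_contra hlt
  have := coeff_homogeneousComponent (n + 1) f d
  rw [h, coeff_zero, if_pos (by omega)] at this
  exact mem_support_iff.1 hd this.symm

theorem homogeneousComponent_mul_of_totalDegree_le {φ ψ : MvPolynomial σ R} {m n : ℕ}
    (hφ : φ.totalDegree ≤ m) (hψ : ψ.totalDegree ≤ n) :
    homogeneousComponent (m + n) (φ * ψ) =
      homogeneousComponent m φ * homogeneousComponent n ψ := by
  classical
  ext d
  rw [coeff_homogeneousComponent]
  split_ifs with hd
  · rw [coeff_mul, coeff_mul]
    refine Finset.sum_congr rfl fun x hx => ?_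
    have hsum : x.1.degree + x.2.degree = m + n := by
      rw [← map_add, Finset.HasAntidiagonal.mem_antidiagonal.1 hx, hd]
    simp only [coeff_homogeneousComponent]
    by_cases h₁ : x.1.degree = m
    · rw [if_pos h₁, if_pos (by omega)]
    · rw [if_neg h₁, zero_mul]
      rcases lt_or_gt_of_ne h₁ with h₁ | h₁
      · rw [coeff_eq_zero_of_totalDegree_lt (f := ψ) (by change _ < x.2.degree; omega), mul_zero]
      · rw [coeff_eq_zero_of_totalDegree_lt (f := φ) (by change _ < x.1.degree; omega), zero_mul]
  · exact (((homogeneousComponent_isHomogeneous m φ).mul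
      (homogeneousComponent_isHomogeneous n ψ)).coeff_eq_zero hd).symm

theorem totalDegree_multiset_prod_le {t : Multiset (MvPolynomial σ R)} {m : ℕ}
    (ht : ∀ φ ∈ t, φ.totalDegree ≤ m) : t.prod.totalDegree ≤ Multiset.card t * m :=
  (totalDegree_multiset_prod t).trans <| by
    simpa using Multiset.sum_map_le_sum_map _ (fun _ => m) ht

theorem homogeneousComponent_multiset_prod {t : Multiset (MvPolynomial σ R)} {m : ℕ}
    (ht : ∀ φ ∈ t, φ.totalDegree ≤ m) :
    homogeneousComponent (Multiset.card t * m) t.prod =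
      (t.map (homogeneousComponent m)).prod := by
  induction t using Multiset.induction_on with
  | empty => simp
  | cons φ t ih =>
    have ht' : ∀ ψ ∈ t, ψ.totalDegree ≤ m := fun ψ hψ => ht ψ (Multiset.mem_cons_of_mem hψ)
    rw [Multiset.card_cons, Nat.succ_mul, add_comm, Multiset.prod_cons, Multiset.map_cons,
      Multiset.prod_cons, homogeneousComponent_mul_of_totalDegree_le
        (ht φ (Multiset.mem_cons_self φ t)) (totalDegree_multiset_prod_le ht'), ih ht']

theorem aeval_monomial_eq_multiset_prod {A : Type*} [CommSemiring A] [Algebra R A] (g : σ → A)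
    (s : σ →₀ ℕ) (r : R) :
    aeval g (monomial s r) = algebraMap R A r * (s.toMultiset.map g).prod := by
  rw [aeval_monomial, Finsupp.toMultiset_map, Finsupp.prod_toMultiset,
    Finsupp.prod_mapDomain_index (fun _ => pow_zero _) (fun _ _ _ => pow_add _ _ _)]

theorem totalDegree_aeval_monomial_le {g : σ → MvPolynomial τ R} {m : ℕ}
    (hg : ∀ i, (g i).totalDegree ≤ m) (s : σ →₀ ℕ) (r : R) :
    (aeval g (monomial s r)).totalDegree ≤ s.degree * m := by
  rw [aeval_monomial_eq_multiset_prod, algebraMap_eq]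
  refine (totalDegree_mul _ _).trans ?_
  rw [totalDegree_C, zero_add, ← Finsupp.card_toMultiset_eq_degree, ← Multiset.card_map g]
  exact totalDegree_multiset_prod_le (by simpa using fun i _ => hg i)

theorem totalDegree_aeval_le {g : σ → MvPolynomial τ R} {m : ℕ}
    (hg : ∀ i, (g i).totalDegree ≤ m) (f : MvPolynomial σ R) :
    (aeval g f).totalDegree ≤ f.totalDegree * m := by
  conv_lhs => rw [f.as_sum, map_sum]
  exact totalDegree_finsetSum_le fun s hs =>
    (totalDegree_aeval_monomial_le hg s _).trans (Nat.mul_le_mul_right m (le_totalDegree hs))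

theorem homogeneousComponent_aeval_of_totalDegree_le {g : σ → MvPolynomial τ R}
    {f : MvPolynomial σ R} {m e : ℕ} (hm : 0 < m) (hg : ∀ i, (g i).totalDegree ≤ m)
    (hf : f.totalDegree ≤ e) :
    homogeneousComponent (e * m) (aeval g f) =
      aeval (fun i => homogeneousComponent m (g i)) (homogeneousComponent e f) := by
  conv_lhs => rw [f.as_sum]
  rw [homogeneousComponent_apply e f, map_sum, map_sum, map_sum, Finset.sum_filter]
  refine Finset.sum_congr rfl fun s hs => ?_
  split_ifs with hs_e
  · rw [aeval_monomial_eq_multiset_prod, aeval_monomial_eq_multiset_prod, algebraMap_eq,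
      homogeneousComponent_C_mul, ← hs_e, ← Finsupp.card_toMultiset_eq_degree,
      ← Multiset.card_map g, homogeneousComponent_multiset_prod (by simpa using fun i _ => hg i),
      Multiset.map_map]
    rfl
  · refine homogeneousComponent_eq_zero _ _ ((totalDegree_aeval_monomial_le hg s _).trans_lt ?_)
    exact Nat.mul_lt_mul_of_pos_right (lt_of_le_of_ne ((le_totalDegree hs).trans hf) hs_e) hm

theorem IsHomogeneous.aeval_mul_left {A : Type*} [CommSemiring A] [Algebra R A]
    {φ : MvPolynomial σ R} {m : ℕ} (hφ : φ.IsHomogeneous m) (r : A) (x : σ → A) :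
    MvPolynomial.aeval (fun i => r * x i) φ = r ^ m * MvPolynomial.aeval x φ := by
  conv_lhs => rw [φ.as_sum]
  conv_rhs => rw [φ.as_sum]
  rw [map_sum, map_sum, Finset.mul_sum]
  refine Finset.sum_congr rfl fun s hs => ?_
  rw [aeval_monomial_eq_multiset_prod, aeval_monomial_eq_multiset_prod, Multiset.prod_map_mul,
    Multiset.map_const', Multiset.prod_replicate, Finsupp.card_toMultiset_eq_degree,
    Finsupp.degree_apply, ← hφ.degree_eq_sum_deg_support hs]
  ring

/-- `rowSubst f g` is `g(f(row₁), …, f(rowₙ))`, where `rowᵢ` is the `i`-th row of the matrix of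
variables `x_{ik}`, `(i, k) : σ × σ`. -/
noncomputable def rowSubst (f g : MvPolynomial σ R) : MvPolynomial (σ × σ) R :=
  aeval (fun i => rename (Prod.mk i) f) g

theorem eval_rowSubst (x : σ × σ → R) (f g : MvPolynomial σ R) :
    eval x (rowSubst f g) = eval (fun i => eval (fun k => x (i, k)) f) g := by
  induction g using MvPolynomial.induction_on with
  | C a => simp [rowSubst]
  | add g g' hg hg' => simp_all [rowSubst]
  | mul_X g i hg => simp_all [rowSubst, eval_rename_prod_mk]

theorem totalDegree_rowSubst_le (f g : MvPolynomial σ R) :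
    (rowSubst f g).totalDegree ≤ g.totalDegree * f.totalDegree :=
  totalDegree_aeval_le (fun _ => totalDegree_rename_le _ _) g

theorem homogeneousComponent_rowSubst {f g : MvPolynomial σ R} {m e : ℕ} (hm : 0 < m)
    (hf : f.totalDegree ≤ m) (hg : g.totalDegree ≤ e) :
    homogeneousComponent (e * m) (rowSubst f g) =
      rowSubst (homogeneousComponent m f) (homogeneousComponent e g) := by
  rw [rowSubst, homogeneousComponent_aeval_of_totalDegree_le hm
    (fun _ => (totalDegree_rename_le _ _).trans hf) hg]
  simp_rw [← rename_homogeneousComponent]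
  rfl

theorem pderiv_rowSubst [Fintype σ] (f g : MvPolynomial σ R) (a j : σ) :
    pderiv (a, j) (rowSubst f g) =
      rowSubst f (pderiv a g) * rename (Prod.mk a) (pderiv j f) := by
  classical
  rw [rowSubst, pderiv_aeval, Finset.sum_eq_single a, pderiv_rename (Prod.mk_right_injective a)]
  · rfl
  · intro b _ hb
    refine mul_eq_zero_of_right _ (pderiv_eq_zero_of_notMem_vars fun h => hb ?_)
    obtain ⟨k, -, hk⟩ := Finset.mem_image.1 (vars_rename _ _ h)
    exact congrArg Prod.fst hk
  · simp

end CommSemiring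

section Domain

variable {R σ : Type*} [CommRing R] [IsDomain R]

theorem IsHomogeneous.exists_pderiv_ne_zero [CharZero R] [Fintype σ] {φ : MvPolynomial σ R}
    {n : ℕ} (hφ : φ.IsHomogeneous n) (hn : n ≠ 0) (h0 : φ ≠ 0) : ∃ i, pderiv i φ ≠ 0 := by
  by_contra! h
  have euler := hφ.sum_X_mul_pderiv
  simp [h, hn, h0] at euler

theorem rowSubst_ne_zero [Infinite R] {f g : MvPolynomial σ R} {m e : ℕ}
    (hf : f.IsHomogeneous m) (hm : 0 < m) (hf0 : f ≠ 0) (hg : g.IsHomogeneous e) (hg0 : g ≠ 0) :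
    rowSubst f g ≠ 0 := by
  obtain ⟨w, hw⟩ : ∃ w, eval w f ≠ 0 := by
    by_contra! h
    exact hf0 (funext fun x => by simp [h x])
  let ψ : MvPolynomial (σ × σ) R →ₐ[R] MvPolynomial σ R := aeval fun q => X q.1 * C (w q.2)
  have hrow : ∀ i, ψ (rename (Prod.mk i) f) = C (eval w f) * X i ^ m := fun i => by
    rw [aeval_rename]
    change aeval (fun k => X i * (algebraMap R _ ∘ w) k) f = _
    rw [hf.aeval_mul_left, aeval_algebraMap_apply, mul_comm]
    rfl
  have hψ : ψ (rowSubst f g) = C (eval w f ^ e) * expand m g := by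
    rw [rowSubst, ← AlgHom.comp_apply, comp_aeval]
    simp_rw [hrow]
    rw [hg.aeval_mul_left, map_pow]
    rfl
  intro h
  rw [h, map_zero, eq_comm, mul_eq_zero, C_eq_zero, expand_eq_zero hm] at hψ
  exact hψ.elim (pow_ne_zero e hw) hg0

end Domain

end MvPolynomial

open MvPolynomial

section Bisym

variable {R : Type*} [CommRing R] [IsDomain R] [Infinite R] {n : ℕ} {P : MvPolynomial (Fin n) R}

theorem Bisym.rename_swap_rowSubst (hbi : Bisym fun x => eval x P) :
    rename Prod.swap (rowSubst P P) = rowSubst P P :=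
  funext fun x => by
    rw [eval_rename, eval_rowSubst, eval_rowSubst]
    exact (hbi fun i k => x (i, k)).symm

theorem Bisym.rowSubst_pderiv_mul_eq (hbi : Bisym fun x => eval x P) (a j : Fin n) :
    rowSubst P (pderiv a P) * rename (Prod.mk a) (pderiv j P) =
      rename Prod.swap (rowSubst P (pderiv j P) * rename (Prod.mk j) (pderiv a P)) := by
  rw [← pderiv_rowSubst, ← pderiv_rowSubst, ← pderiv_rename Prod.swap_injective]
  exact congrArg (pderiv (a, j)) hbi.rename_swap_rowSubst.symm

theorem Bisym.rowSubst_pderiv_homogeneousComponent_mul_eq_zero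
    (hbi : Bisym fun x => eval x P) {p : ℕ} (hP : P.totalDegree = p) (hp : 2 ≤ p) {j : Fin n}
    (hQ : (pderiv j P).totalDegree ≤ p - 2) (a : Fin n) :
    rowSubst (homogeneousComponent p P) (pderiv a (homogeneousComponent p P)) *
      rename (Prod.mk a) (homogeneousComponent (pderiv j P).totalDegree (pderiv j P)) = 0 := by
  set d := (pderiv j P).totalDegree
  have hD : (pderiv a P).totalDegree ≤ p - 1 := hP ▸ totalDegree_pderiv_le a P
  have hlow : (rename Prod.swap
      (rowSubst P (pderiv j P) * rename (Prod.mk j) (pderiv a P))).totalDegree < (p - 1) * p + d :=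
    calc _ ≤ (rowSubst P (pderiv j P)).totalDegree
            + (rename (Prod.mk j) (pderiv a P)).totalDegree :=
          (totalDegree_rename_le _ _).trans (totalDegree_mul _ _)
      _ ≤ d * p + (p - 1) :=
          add_le_add (hP ▸ totalDegree_rowSubst_le _ _) ((totalDegree_rename_le _ _).trans hD)
      _ < (p - 1) * p + d := by
          obtain ⟨q, rfl⟩ : ∃ q, p = q + 2 := ⟨p - 2, by omega⟩
          rw [Nat.add_sub_cancel] at hQ
          rw [show q + 2 - 1 = q + 1 by omega]
          nlinarith
  have htop := congrArg (homogeneousComponent ((p - 1) * p + d)) (hbi.rowSubst_pderiv_mul_eq a j)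
  have hLdeg : (rowSubst P (pderiv a P)).totalDegree ≤ (p - 1) * p :=
    (totalDegree_rowSubst_le _ _).trans (by rw [hP]; exact Nat.mul_le_mul_right _ hD)
  rwa [homogeneousComponent_eq_zero _ _ hlow,
    homogeneousComponent_mul_of_totalDegree_le hLdeg (totalDegree_rename_le _ _),
    homogeneousComponent_rowSubst (by omega) hP.le hD, ← rename_homogeneousComponent,
    homogeneousComponent_pderiv, Nat.sub_add_cancel (by omega)] at htop

end Bisym

/-- If the top homogeneous component of a bisymmetric polynomial function of degree
`p ≥ 2` does not depend on the variable `x_j`, then neither does the function itself. -/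
theorem bisym_essential_variables
    {K : Type*} [Field K] [CharZero K] {n p : ℕ}
    (P : MvPolynomial (Fin n) K)
    (hbi : Bisym fun x : Fin n → K => MvPolynomial.eval x P)
    (hdeg : P.totalDegree = p) (hp : 2 ≤ p) (j : Fin n)
    (hj : MvPolynomial.pderiv j (MvPolynomial.homogeneousComponent p P) = 0) :
    MvPolynomial.pderiv j P = 0 := by
  by_contra hQ
  have hP0 : P ≠ 0 := by
    rintro rfl
    rw [totalDegree_zero] at hdeg
    omega
  have hPp := homogeneousComponent_isHomogeneous p P
  have hPp0 : homogeneousComponent p P ≠ 0 := hdeg ▸ homogeneousComponent_totalDegree_ne_zero hP0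
  obtain ⟨a, ha⟩ := hPp.exists_pderiv_ne_zero (by omega) hPp0
  have hQdeg : (pderiv j P).totalDegree ≤ p - 2 := by
    refine totalDegree_le_of_homogeneousComponent_eq_zero ?_ ?_
    · have := totalDegree_pderiv_le j P
      omega
    · rw [homogeneousComponent_pderiv, show p - 2 + 1 + 1 = p by omega, hj]
  rcases mul_eq_zero.1 (hbi.rowSubst_pderiv_homogeneousComponent_mul_eq_zero hdeg hp hQdeg a)
    with h | h
  · exact rowSubst_ne_zero hPp (by omega) hPp0 hPp.pderiv ha h
  · exact homogeneousComponent_totalDegree_ne_zero hQ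
      ((map_eq_zero_iff _ (rename_injective _ (Prod.mk_right_injective a))).1 h)
end

section
/- Let K be a field of characteristic zero and let P : K^n → K be a bisymmetric polynomial function of degree p ≥ 2 whose homogeneous component of degree p is the monomial P_p(x) = c·x^γ with c ≠ 0 and |γ| = p. Suppose P ≠ P_p, let q < p be the degree of P − P_p and let P_q be the homogeneous component of degree q of P. Then for every n×n matrix X = (x_{ij}) over K with rows r_1,…,r_n and columns c_1,…,c_n, Σ_{i=1}^n P_q(r_i)·(∂_{x_i} P_p)(P_p(r_1),…,P_p(r_n)) = Σ_{i=1}^n P_q(c_i)·(∂_{x_i} P_p)(P_p(c_1),…,P_p(c_n)). -/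
namespace MvPolynomial

section Taylor

variable {R S σ : Type*} [CommSemiring R] [CommRing S] [Algebra R S] [Fintype σ]

theorem aeval_add_sub_sub_sum_pderiv_mem_sq (φ : MvPolynomial σ R) (a b : σ → S)
    {I : Ideal S} (hb : ∀ i, b i ∈ I) :
    aeval (a + b) φ - aeval a φ - ∑ i, b i * aeval a (pderiv i φ) ∈ I ^ 2 := by
  classical
  induction φ using MvPolynomial.induction_on with
  | C r => simp
  | add φ ψ hφ hψ =>
    convert add_mem hφ hψ using 1
    simp only [map_add, mul_add, Finset.sum_add_distrib]
    ring
  | mul_X φ j hφ =>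
    set e := aeval (a + b) φ - aeval a φ - ∑ i, b i * aeval a (pderiv i φ)
    set L := ∑ i, b i * aeval a (pderiv i φ)
    have hL : L ∈ I := Ideal.sum_mem _ fun i _ => I.mul_mem_right _ (hb i)
    have hderiv : ∑ i, b i * aeval a (pderiv i (φ * X j)) = L * a j + b j * aeval a φ := by
      simp only [Derivation.leibniz, pderiv_X, Pi.single_apply, smul_eq_mul, mul_ite, mul_one,
        mul_zero, map_add, map_mul, aeval_X, apply_ite (aeval a), map_zero, mul_add,
        Finset.sum_add_distrib, Finset.sum_ite_eq, Finset.mem_univ, if_true, L, Finset.sum_mul]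
      rw [add_comm]
      congr 1
      exact Finset.sum_congr rfl fun _ _ => by ring
    have hstep : aeval (a + b) (φ * X j) - aeval a (φ * X j) -
        ∑ i, b i * aeval a (pderiv i (φ * X j)) = e * (a j + b j) + L * b j := by
      rw [hderiv]
      simp only [map_mul, aeval_X, Pi.add_apply, e]
      ring
    rw [hstep, pow_two]
    exact add_mem (Ideal.mul_mem_right _ _ (pow_two I ▸ hφ)) (Ideal.mul_mem_mul hL (hb j))

end Taylor

section Homogenization

variable {R S T σ : Type*} [CommSemiring R] [CommSemiring S] [Algebra R S]
  [CommSemiring T] [Algebra R T]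

theorem IsHomogeneous.eval_smul {φ : MvPolynomial σ R} {n : ℕ} (hφ : φ.IsHomogeneous n)
    (s : R) (x : σ → R) : eval (s • x) φ = s ^ n * eval x φ := by
  rw [eval_eq, eval_eq, Finset.mul_sum]
  refine Finset.sum_congr rfl fun d hd => ?_
  have hdeg : ∑ i ∈ d.support, d i = n := by
    simpa [Finsupp.weight_apply, Finsupp.sum] using hφ (mem_support_iff.mp hd)
  simp only [Pi.smul_apply, smul_eq_mul, mul_pow, Finset.prod_mul_distrib,
    Finset.prod_pow_eq_pow_sum, hdeg]
  ring

/-- `t ^ d * φ (t⁻¹ • y)` for `d = φ.totalDegree`, in a form that makes sense in any algebra. -/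
noncomputable def aevalHomogenization (φ : MvPolynomial σ R) (y : σ → S) (t : S) : S :=
  ∑ k ∈ Finset.range (φ.totalDegree + 1),
    aeval y (homogeneousComponent k φ) * t ^ (φ.totalDegree - k)

theorem map_aevalHomogenization (f : S →ₐ[R] T) (φ : MvPolynomial σ R) (y : σ → S) (t : S) :
    f (aevalHomogenization φ y t) = aevalHomogenization φ (fun i => f (y i)) (f t) := by
  simp only [aevalHomogenization, map_sum, map_mul, map_pow, comp_aeval_apply]

theorem aevalHomogenization_eq_pow_mul_eval {K : Type*} [Field K] (φ : MvPolynomial σ K)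
    (x : σ → K) {t : K} (ht : t ≠ 0) :
    aevalHomogenization φ x t = t ^ φ.totalDegree * eval (t⁻¹ • x) φ := by
  conv_rhs => arg 2; rw [← sum_homogeneousComponent φ]
  rw [map_sum, Finset.mul_sum]
  refine Finset.sum_congr rfl fun k hk => ?_
  rw [aeval_eq_eval, (homogeneousComponent_isHomogeneous k φ).eval_smul, inv_pow,
    pow_sub₀ t ht (Nat.lt_succ_iff.mp (Finset.mem_range.mp hk))]
  ring

end Homogenization

section Gap

variable {R σ : Type*} [CommRing R]

theorem homogeneousComponent_eq_zero_of_totalDegree_sub_le {φ : MvPolynomial σ R} {q k : ℕ}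
    (hq : (φ - homogeneousComponent φ.totalDegree φ).totalDegree ≤ q) (hqk : q < k)
    (hk : k ≠ φ.totalDegree) : homogeneousComponent k φ = 0 := by
  have h := homogeneousComponent_eq_zero k (φ - homogeneousComponent φ.totalDegree φ)
    (hq.trans_lt hqk)
  rwa [map_sub, homogeneousComponent_of_mem (homogeneousComponent_mem _ φ), if_neg hk,
    sub_zero] at h

end Gap

end MvPolynomial

section Composite

open scoped Polynomial
open Polynomial (C X)
open MvPolynomial (aeval eval homogeneousComponent pderiv aevalHomogenization)

variable {R σ : Type*} [CommRing R]

theorem aeval_C_eq_C_eval (x : σ → R) (ψ : MvPolynomial σ R) :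
    aeval (fun i => C (x i)) ψ = C (eval x ψ) :=
  MvPolynomial.aeval_algebraMap_apply (R := R) (B := R[X]) x ψ

theorem coeff_aevalHomogenization_C_X (φ : MvPolynomial σ R) (x : σ → R) {k : ℕ}
    (hk : k ≤ φ.totalDegree) :
    (aevalHomogenization φ (fun i => C (x i)) X).coeff k =
      eval x (homogeneousComponent (φ.totalDegree - k) φ) := by
  simp only [aevalHomogenization, Polynomial.finsetSum_coeff, aeval_C_eq_C_eval,
    Polynomial.coeff_C_mul_X_pow]
  rw [Finset.sum_eq_single (φ.totalDegree - k)]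
  · rw [if_pos (by omega)]
  · intro j hj hjk
    have := Finset.mem_range.mp hj
    rw [if_neg (by omega)]
  · intro h
    exact absurd (Finset.mem_range.mpr (by omega)) h

theorem X_pow_dvd_aevalHomogenization_C_X_sub (φ : MvPolynomial σ R) (x : σ → R) {q : ℕ}
    (hq : (φ - homogeneousComponent φ.totalDegree φ).totalDegree ≤ q) :
    X ^ (φ.totalDegree - q) ∣ aevalHomogenization φ (fun i => C (x i)) X -
      C (eval x (homogeneousComponent φ.totalDegree φ)) := by
  rw [Polynomial.X_pow_dvd_iff]
  intro k hk
  rw [Polynomial.coeff_sub, coeff_aevalHomogenization_C_X _ _ (by omega), Polynomial.coeff_C]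
  rcases Nat.eq_zero_or_pos k with rfl | hk0
  · simp
  · rw [MvPolynomial.homogeneousComponent_eq_zero_of_totalDegree_sub_le hq (by omega) (by omega),
      map_zero, if_neg hk0.ne', sub_zero]

theorem coeff_aevalHomogenization_X_pow (φ : MvPolynomial σ R) (z : σ → R[X]) {q : ℕ}
    (hd : 2 ≤ φ.totalDegree) (hq : (φ - homogeneousComponent φ.totalDegree φ).totalDegree ≤ q)
    (hqd : q < φ.totalDegree) :
    (aevalHomogenization φ z (X ^ φ.totalDegree)).coeff (φ.totalDegree - q) =
      (aeval z (homogeneousComponent φ.totalDegree φ)).coeff (φ.totalDegree - q) := by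
  rw [aevalHomogenization, Polynomial.finsetSum_coeff,
    Finset.sum_eq_single_of_mem φ.totalDegree (Finset.self_mem_range_succ _)]
  · rw [Nat.sub_self, pow_zero, mul_one]
  · intro k hk hkd
    have hk := Finset.mem_range.mp hk
    rcases lt_or_ge q k with hqk | hkq
    · rw [MvPolynomial.homogeneousComponent_eq_zero_of_totalDegree_sub_le hq hqk hkd, map_zero,
        zero_mul, Polynomial.coeff_zero]
    · rw [← pow_mul, Polynomial.coeff_mul_X_pow', if_neg]
      have := Nat.mul_le_mul_right (φ.totalDegree - k) hd
      omega

noncomputable def homogenizedRowComposite (φ : MvPolynomial σ R) (M : σ → σ → R) : R[X] :=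
  aevalHomogenization φ (fun i => aevalHomogenization φ (fun j => C (M i j)) X)
    (X ^ φ.totalDegree)

theorem coeff_homogenizedRowComposite [Fintype σ] (φ : MvPolynomial σ R) {q : ℕ}
    (hd : 2 ≤ φ.totalDegree) (hq : (φ - homogeneousComponent φ.totalDegree φ).totalDegree ≤ q)
    (hqd : q < φ.totalDegree) (M : σ → σ → R) :
    (homogenizedRowComposite φ M).coeff (φ.totalDegree - q) =
      ∑ i, eval (M i) (homogeneousComponent q φ) *
        eval (fun k => eval (M k) (homogeneousComponent φ.totalDegree φ))
          (pderiv i (homogeneousComponent φ.totalDegree φ)) := by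
  set φd := homogeneousComponent φ.totalDegree φ
  set z := fun i => aevalHomogenization φ (fun j => C (M i j)) X
  set a := fun i => C (eval (M i) φd)
  have hb : ∀ i, (z - a) i ∈ Ideal.span {X ^ (φ.totalDegree - q)} := fun i =>
    Ideal.mem_span_singleton.mpr (X_pow_dvd_aevalHomogenization_C_X_sub φ (M i) hq)
  have htaylor := MvPolynomial.aeval_add_sub_sub_sum_pderiv_mem_sq φd a (z - a) hb
  rw [Ideal.span_singleton_pow, Ideal.mem_span_singleton, add_sub_cancel] at htaylor
  obtain ⟨e, he⟩ := htaylor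
  have hexpand : aeval z φd = aeval a φd + ∑ i, (z - a) i * aeval a (pderiv i φd) +
      X ^ ((φ.totalDegree - q) * 2) * e := by
    rw [pow_mul, ← he]
    ring
  rw [homogenizedRowComposite, coeff_aevalHomogenization_X_pow φ z hd hq hqd, hexpand]
  simp only [Polynomial.coeff_add, Polynomial.finsetSum_coeff, aeval_C_eq_C_eval, a,
    Polynomial.coeff_C, Polynomial.coeff_mul_C, Polynomial.coeff_X_pow_mul', Pi.sub_apply,
    Polynomial.coeff_sub]
  have hg : φ.totalDegree - q ≠ 0 := by omega
  have hg2 : ¬(φ.totalDegree - q) * 2 ≤ φ.totalDegree - q := by omega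
  simp only [if_neg hg, if_neg hg2, zero_add, add_zero, sub_zero, z,
    coeff_aevalHomogenization_C_X _ _ (Nat.sub_le _ q), Nat.sub_sub_self hqd.le]

variable {K : Type*} [Field K]

theorem eval_homogenizedRowComposite (φ : MvPolynomial σ K) (M : σ → σ → K) {s : K}
    (hs : s ≠ 0) :
    (homogenizedRowComposite φ M).eval s =
      s ^ (φ.totalDegree * φ.totalDegree) * eval (fun i => eval (s⁻¹ • M i) φ) φ := by
  rw [← Polynomial.coe_aeval_eq_eval, homogenizedRowComposite]
  simp only [MvPolynomial.map_aevalHomogenization, Polynomial.aeval_C, Polynomial.aeval_X,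
    map_pow, Algebra.algebraMap_self, RingHom.id_apply,
    MvPolynomial.aevalHomogenization_eq_pow_mul_eval _ _ hs,
    MvPolynomial.aevalHomogenization_eq_pow_mul_eval _ _ (pow_ne_zero _ hs)]
  rw [← pow_mul]
  refine congrArg (_ * eval · φ) (funext fun i => ?_)
  rw [Pi.smul_apply, smul_eq_mul, inv_mul_cancel_left₀ (pow_ne_zero _ hs)]

theorem homogenizedRowComposite_transpose [Infinite K] {n : ℕ} {φ : MvPolynomial (Fin n) K}
    (hφ : Bisym fun x => eval x φ) (M : Fin n → Fin n → K) :
    homogenizedRowComposite φ M = homogenizedRowComposite φ (fun i j => M j i) := by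
  refine Polynomial.eq_of_infinite_eval_eq _ _ ((Set.finite_singleton 0).infinite_compl.mono ?_)
  intro s hs
  simp only [Set.mem_compl_iff, Set.mem_singleton_iff] at hs
  simp only [Set.mem_ofPred_eq, eval_homogenizedRowComposite _ _ hs]
  exact congrArg _ (hφ fun i j => s⁻¹ * M i j)

end Composite

theorem bisym_Pq_equation_general
    {K : Type*} [Field K] [CharZero K] {n p q : ℕ}
    (P : MvPolynomial (Fin n) K)
    (hbi : Bisym fun x : Fin n → K => MvPolynomial.eval x P)
    (hdeg : P.totalDegree = p) (hp : 2 ≤ p)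
    (hq : (P - MvPolynomial.homogeneousComponent p P).totalDegree = q) (hqp : q < p) :
    ∀ X : Fin n → Fin n → K,
      (∑ i, MvPolynomial.eval (X i) (MvPolynomial.homogeneousComponent q P) *
        MvPolynomial.eval
          (fun k => MvPolynomial.eval (X k) (MvPolynomial.homogeneousComponent p P))
          (MvPolynomial.pderiv i (MvPolynomial.homogeneousComponent p P))) =
      (∑ i, MvPolynomial.eval (fun l => X l i) (MvPolynomial.homogeneousComponent q P) *
        MvPolynomial.eval
          (fun k => MvPolynomial.eval (fun l => X l k)
            (MvPolynomial.homogeneousComponent p P))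
          (MvPolynomial.pderiv i (MvPolynomial.homogeneousComponent p P))) := by
  intro X
  subst hdeg
  rw [← coeff_homogenizedRowComposite P hp hq.le hqp X,
    ← coeff_homogenizedRowComposite P hp hq.le hqp fun i j => X j i,
    homogenizedRowComposite_transpose hbi X]

/-- The equation satisfied by `P_q`, the top homogeneous component of `P − P_p`. -/
theorem bisym_Pq_equation
    {K : Type*} [Field K] [CharZero K] {n p q : ℕ}
    (P : MvPolynomial (Fin n) K)
    (hbi : Bisym fun x : Fin n → K => MvPolynomial.eval x P)
    (hdeg : P.totalDegree = p) (hp : 2 ≤ p)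
    (c : K) (hc : c ≠ 0) (γ : Fin n →₀ ℕ) (hγ : ∑ i, γ i = p)
    (hPp : MvPolynomial.homogeneousComponent p P = MvPolynomial.monomial γ c)
    (hne : P ≠ MvPolynomial.homogeneousComponent p P)
    (hq : (P - MvPolynomial.homogeneousComponent p P).totalDegree = q) (hqp : q < p) :
    ∀ X : Fin n → Fin n → K,
      (∑ i, MvPolynomial.eval (X i) (MvPolynomial.homogeneousComponent q P) *
        MvPolynomial.eval
          (fun k => MvPolynomial.eval (X k) (MvPolynomial.homogeneousComponent p P))
          (MvPolynomial.pderiv i (MvPolynomial.homogeneousComponent p P))) =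
      (∑ i, MvPolynomial.eval (fun l => X l i) (MvPolynomial.homogeneousComponent q P) *
        MvPolynomial.eval
          (fun k => MvPolynomial.eval (fun l => X l k)
            (MvPolynomial.homogeneousComponent p P))
          (MvPolynomial.pderiv i (MvPolynomial.homogeneousComponent p P))) :=
  bisym_Pq_equation_general P hbi hdeg hp hq hqp
end

section
/- Let K be a field of characteristic zero and let P : K^n → K be a bisymmetric polynomial function of degree p ≥ 2 whose homogeneous component of degree p is the monomial P_p(x) = c·x^γ with c ≠ 0 and |γ| = p. Suppose P ≠ P_p, let q < p be the degree of P − P_p and let P_q be the homogeneous component of degree q of P. If there exists an index j ∈ {1,…,n} with 0 < γ_j < p − q, then P_q = 0. -/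
open MvPolynomial

namespace Finsupp

variable {α β M : Type*}

theorem sum_mapDomain_prodMk_apply [Fintype α] [AddCommMonoid M] (x : α → β →₀ M) (a : α)
    (b : β) : (∑ a', (x a').mapDomain (Prod.mk a')) (a, b) = x a b := by
  classical
  rw [finsetSum_apply, Finset.sum_eq_single a]
  · exact mapDomain_apply (Prod.mk_right_injective a) _ _
  · rintro a' - ha'
    exact mapDomain_of_notMem_range _ _ fun ⟨_, h⟩ => ha' (congrArg Prod.fst h)
  · simp

theorem curry_add [AddZeroClass M] (f g : α × β →₀ M) : (f + g).curry = f.curry + g.curry :=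
  map_add curryAddEquiv f g

theorem exists_ne_and_add_degree_le {γ δ : α →₀ ℕ} (hne : δ ≠ γ) (hle : δ.degree ≤ γ.degree) :
    ∃ m, γ m ≠ δ m ∧ γ m + δ.degree ≤ δ m + γ.degree := by
  by_cases hlt : ∃ m, γ m < δ m
  · obtain ⟨m, hm⟩ := hlt
    exact ⟨m, hm.ne, by omega⟩
  push Not at hlt
  obtain ⟨m, hm⟩ : ∃ m, δ m ≠ γ m := by
    by_contra! h
    exact hne (Finsupp.ext h)
  have hsplit : γ.degree = δ.degree + (γ - δ).degree := by
    rw [← map_add, add_tsub_cancel_of_le fun m => hlt m]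
  have hm_le := le_degree m (γ - δ)
  rw [tsub_apply] at hm_le
  exact ⟨m, Ne.symm hm, by omega⟩

noncomputable def vecMulVec [Finite α] [Finite β] [MulZeroClass M] (u : α →₀ M) (v : β →₀ M) :
    α × β →₀ M :=
  equivFunOnFinite.symm fun x => u x.1 * v x.2

section vecMulVec

variable [Finite α] [Finite β]

@[simp]
theorem vecMulVec_apply [MulZeroClass M] (u : α →₀ M) (v : β →₀ M) (x : α × β) :
    vecMulVec u v x = u x.1 * v x.2 := rfl

theorem curry_vecMulVec [MulZeroClass M] (u : α →₀ M) (v : β →₀ M) (a : α) :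
    (vecMulVec u v).curry a = u a • v := by
  ext b
  simp

theorem mapDomain_swap_vecMulVec [CommSemiring M] (u : α →₀ M) (v : β →₀ M) :
    (vecMulVec u v).mapDomain Prod.swap = vecMulVec v u := by
  ext ⟨b, a⟩
  rw [← Prod.swap_prod_mk, mapDomain_apply Prod.swap_injective]
  simp [mul_comm]

theorem degree_vecMulVec [Fintype α] [Fintype β] [NonUnitalNonAssocSemiring M]
    (u : α →₀ M) (v : β →₀ M) : (vecMulVec u v).degree = u.degree * v.degree := by
  simp_rw [degree_eq_sum, Fintype.sum_prod_type, vecMulVec_apply, Finset.sum_mul_sum]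

end vecMulVec

end Finsupp

namespace MvPolynomial

variable {R σ τ : Type*} [CommSemiring R]

theorem coeff_prod_rename_prodMk [Fintype τ] (A : τ → MvPolynomial σ R) (E : τ × σ →₀ ℕ) :
    coeff E (∏ i, rename (Prod.mk i) (A i)) = ∏ i, coeff (E.curry i) (A i) := by
  classical
  have hexpand : ∏ i, rename (Prod.mk i) (A i) = ∑ x ∈ Fintype.piFinset fun i => (A i).support,
      monomial (∑ i, (x i).mapDomain (Prod.mk i)) (∏ i, coeff (x i) (A i)) := by
    simp_rw [monomial_sum_prod]
    rw [← Finset.prod_univ_sum (fun i => (A i).support)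
      fun i u => monomial (u.mapDomain (Prod.mk i)) (coeff u (A i))]
    refine Finset.prod_congr rfl fun i _ => ?_
    conv_lhs => rw [as_sum (A i)]
    simp_rw [map_sum, rename_monomial]
  have hcurry (x : τ → σ →₀ ℕ) (hx : ∑ i, (x i).mapDomain (Prod.mk i) = E) : x = E.curry := by
    ext i k
    rw [← hx, Finsupp.curry_apply, Finsupp.sum_mapDomain_prodMk_apply]
  rw [hexpand, coeff_sum, Finset.sum_eq_single (fun i => E.curry i)]
  · rw [coeff_monomial, if_pos]
    ext ⟨i, k⟩
    rw [Finsupp.sum_mapDomain_prodMk_apply, Finsupp.curry_apply]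
  · intro x _ hx
    rw [coeff_monomial, if_neg fun h => hx (hcurry x h)]
  · intro hE
    obtain ⟨i, hi⟩ := not_forall.mp (mt Fintype.mem_piFinset.mpr hE)
    rw [coeff_monomial]
    split_ifs
    · exact Finset.prod_eq_zero (Finset.mem_univ i) (notMem_support_iff.mp hi)
    · rfl

theorem totalDegree_bind₁_le {f : σ → MvPolynomial τ R} {p : ℕ} (hf : ∀ i, (f i).totalDegree ≤ p)
    (φ : MvPolynomial σ R) : (bind₁ f φ).totalDegree ≤ φ.totalDegree * p := by
  conv_lhs => rw [as_sum φ]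
  rw [map_sum]
  refine totalDegree_finsetSum_le fun d hd => ?_
  rw [bind₁_monomial]
  calc (C (coeff d φ) * ∏ i ∈ d.support, f i ^ d i).totalDegree
      ≤ ∑ i ∈ d.support, d i * p := by
        refine (totalDegree_mul _ _).trans ?_
        rw [totalDegree_C, zero_add]
        refine (totalDegree_finsetProd _ _).trans (Finset.sum_le_sum fun i _ => ?_)
        exact (totalDegree_pow _ _).trans (Nat.mul_le_mul_left _ (hf i))
    _ = d.degree * p := by rw [Finsupp.degree_apply, Finset.sum_mul]
    _ ≤ φ.totalDegree * p := Nat.mul_le_mul_right _ (le_totalDegree hd)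

/-- `compRows φ P = φ(P(x₁.), …, P(xₙ.))`, a polynomial in the entries `x (i, k)` of a matrix. -/
noncomputable def compRows (φ : MvPolynomial τ R) (P : MvPolynomial σ R) :
    MvPolynomial (τ × σ) R :=
  bind₁ (fun i => rename (Prod.mk i) P) φ

theorem eval_compRows (φ : MvPolynomial τ R) (P : MvPolynomial σ R) (x : τ × σ → R) :
    eval x (compRows φ P) = eval (fun i => eval (fun k => x (i, k)) P) φ := by
  refine (eval₂Hom_bind₁ (RingHom.id R) x _ φ).trans ?_
  change eval (fun i => eval x (rename (Prod.mk i) P)) φ = _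
  simp only [eval_rename]
  rfl

theorem coeff_compRows_monomial_add [Fintype τ] {γ : τ →₀ ℕ} {c : R} {T : MvPolynomial τ R}
    {P : MvPolynomial σ R} {p q : ℕ} (hP : P.totalDegree ≤ p) (hT : T.totalDegree ≤ q)
    {E : τ × σ →₀ ℕ} (hE : q * p < E.degree) :
    coeff E (compRows (monomial γ c + T) P) = c * ∏ i, coeff (E.curry i) (P ^ γ i) := by
  have hTzero : coeff E (compRows T P) = 0 := by
    refine coeff_eq_zero_of_totalDegree_lt (lt_of_le_of_lt ?_ hE)
    refine (totalDegree_bind₁_le (fun i => (totalDegree_rename_le _ P).trans hP) T).trans ?_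
    exact Nat.mul_le_mul_right _ hT
  rw [show compRows (monomial γ c + T) P = compRows (monomial γ c) P + compRows T P from
      map_add _ _ _, coeff_add, hTzero, add_zero, compRows, bind₁_monomial, coeff_C_mul,
    Finset.prod_subset (Finset.subset_univ γ.support) fun i _ hi => by
      rw [Finsupp.notMem_support_iff.mp hi, pow_zero]]
  simp_rw [← map_pow]
  rw [coeff_prod_rename_prodMk]

section DominantMonomial

variable {γ : σ →₀ ℕ} {c : R} {T : MvPolynomial σ R} {p q : ℕ}

theorem coeff_monomial_add_pow (e : σ →₀ ℕ) (m : ℕ) :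
    coeff e ((monomial γ c + T) ^ m) =
      ∑ k ∈ Finset.range (m + 1), coeff e (monomial γ c ^ k * T ^ (m - k)) * m.choose k := by
  rw [add_pow, coeff_sum]
  refine Finset.sum_congr rfl fun k _ => ?_
  rw [← C_eq_coe_nat, mul_comm, coeff_C_mul, mul_comm]

theorem coeff_monomial_pow_mul_pow_eq_zero (hγ : γ.degree = p) (hT : T.totalDegree ≤ q)
    {k l : ℕ} {e : σ →₀ ℕ} (he : k * p + l * q < e.degree) :
    coeff e (monomial γ c ^ k * T ^ l) = 0 := by
  refine coeff_eq_zero_of_totalDegree_lt (lt_of_le_of_lt ?_ he)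
  have hmon : (monomial γ c).totalDegree ≤ p := (totalDegree_monomial_le γ c).trans hγ.le
  calc (monomial γ c ^ k * T ^ l).totalDegree
      ≤ k * (monomial γ c).totalDegree + l * T.totalDegree :=
        (totalDegree_mul _ _).trans (add_le_add (totalDegree_pow _ _) (totalDegree_pow _ _))
    _ ≤ k * p + l * q := by gcongr

-- `he` says `(m - 1) p + q < |e|`, written without truncated subtraction so that `m = 0` is allowed.
theorem coeff_monomial_add_pow_of_lt [DecidableEq σ] (hγ : γ.degree = p)
    (hT : T.totalDegree ≤ q) (hqp : q < p) {m : ℕ} {e : σ →₀ ℕ}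
    (he : m * p + q < e.degree + p) :
    coeff e ((monomial γ c + T) ^ m) = if e = m • γ then c ^ m else 0 := by
  rw [coeff_monomial_add_pow, Finset.sum_range_succ, Finset.sum_eq_zero, zero_add,
    Nat.sub_self, pow_zero, mul_one, Nat.choose_self, Nat.cast_one, mul_one, monomial_pow,
    coeff_monomial]
  · exact if_congr eq_comm rfl rfl
  intro k hk
  obtain ⟨r, rfl⟩ := Nat.exists_eq_add_of_lt (Finset.mem_range.mp hk)
  rw [coeff_monomial_pow_mul_pow_eq_zero hγ hT, zero_mul]
  rw [show k + r + 1 - k = r + 1 by omega]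
  nlinarith

theorem coeff_monomial_add_pow_succ_of_degree_eq (hγ : γ.degree = p) (hT : T.totalDegree ≤ q)
    (hqp : q < p) {m : ℕ} {e : σ →₀ ℕ} (he : e.degree = m * p + q) :
    coeff e ((monomial γ c + T) ^ (m + 1)) =
      (m + 1) * c ^ m * if m • γ ≤ e then coeff (e - m • γ) T else 0 := by
  classical
  have htop : coeff e (monomial γ c ^ (m + 1)) = 0 := by
    rw [monomial_pow, coeff_monomial, if_neg]
    intro h
    rw [← h, map_nsmul, hγ, smul_eq_mul] at he
    nlinarith
  rw [coeff_monomial_add_pow, Finset.sum_range_succ, Finset.sum_range_succ, Finset.sum_eq_zero,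
    zero_add, Nat.sub_self, pow_zero, mul_one, htop, zero_mul, add_zero,
    show m + 1 - m = 1 by omega, pow_one, monomial_pow, coeff_monomial_mul',
    Nat.choose_succ_self_right]
  · push_cast
    split_ifs <;> ring
  intro k hk
  obtain ⟨r, rfl⟩ := Nat.exists_eq_add_of_lt (Finset.mem_range.mp hk)
  rw [coeff_monomial_pow_mul_pow_eq_zero hγ hT, zero_mul]
  rw [show k + r + 1 + 1 - k = r + 2 by omega, he]
  nlinarith

theorem coeff_nsmul_monomial_add_pow (hγ : γ.degree = p) (hT : T.totalDegree ≤ q) (hqp : q < p)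
    (m : ℕ) : coeff (m • γ) ((monomial γ c + T) ^ m) = c ^ m := by
  classical
  rw [coeff_monomial_add_pow_of_lt hγ hT hqp, if_pos rfl]
  rw [map_nsmul, hγ, smul_eq_mul]
  omega

theorem coeff_nsmul_add_monomial_add_pow_succ (hγ : γ.degree = p) (hT : T.totalDegree ≤ q)
    (hqp : q < p) (m : ℕ) {δ : σ →₀ ℕ} (hδ : δ.degree = q) :
    coeff (m • γ + δ) ((monomial γ c + T) ^ (m + 1)) = (m + 1) * c ^ m * coeff δ T := by
  rw [coeff_monomial_add_pow_succ_of_degree_eq hγ hT hqp, if_pos le_self_add,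
    add_tsub_cancel_left]
  rw [map_add, map_nsmul, hγ, hδ, smul_eq_mul]

variable [Fintype σ] {γ' δ : σ →₀ ℕ} {j : σ}

theorem coeff_eq_zero_of_prod_coeff_pow_rows_eq_zero [NoZeroDivisors R] [CharZero R]
    (hγ : γ.degree = p) (hT : T.totalDegree ≤ q) (hqp : q < p) (hc : c ≠ 0)
    (hγ' : γ' + Finsupp.single j 1 = γ) (hδ : δ.degree = q)
    (h : ∏ i, coeff ((Finsupp.vecMulVec γ' γ + Finsupp.vecMulVec (Finsupp.single j 1) δ).curry i)
      ((monomial γ c + T) ^ γ i) = 0) :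
    coeff δ T = 0 := by
  classical
  simp only [Finsupp.curry_add, Finsupp.coe_add, Pi.add_apply, Finsupp.curry_vecMulVec] at h
  obtain ⟨i, -, hi⟩ := Finset.prod_eq_zero_iff.mp h
  have hγi : γ' i + Finsupp.single j 1 i = γ i := by rw [← hγ', Finsupp.add_apply]
  by_cases hij : i = j
  · subst hij
    rw [Finsupp.single_eq_same] at hγi hi
    rw [one_smul, ← hγi, coeff_nsmul_add_monomial_add_pow_succ hγ hT hqp _ hδ] at hi
    simpa [hc, Nat.cast_add_one_ne_zero] using hi
  · rw [Finsupp.single_eq_of_ne hij, add_zero] at hγi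
    rw [Finsupp.single_eq_of_ne hij, zero_smul, add_zero, hγi,
      coeff_nsmul_monomial_add_pow hγ hT hqp] at hi
    exact absurd hi (pow_ne_zero _ hc)

theorem prod_coeff_pow_columns_eq_zero (hγ : γ.degree = p) (hT : T.totalDegree ≤ q)
    (hqp : q < p) (hγ' : γ' + Finsupp.single j 1 = γ) (hδ : δ.degree = q) (hδγ : δ ≠ γ)
    (hj : γ j < p - q) :
    ∏ m, coeff ((Finsupp.vecMulVec γ γ' + Finsupp.vecMulVec δ (Finsupp.single j 1)).curry m)
      ((monomial γ c + T) ^ γ m) = 0 := by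
  classical
  obtain ⟨m, hne, hle⟩ := Finsupp.exists_ne_and_add_degree_le hδγ (by omega)
  rw [hγ, hδ] at hle
  refine Finset.prod_eq_zero (Finset.mem_univ m) ?_
  simp only [Finsupp.curry_add, Finsupp.coe_add, Pi.add_apply, Finsupp.curry_vecMulVec]
  set e := γ m • γ' + δ m • Finsupp.single j 1
  have he : e.degree + γ m = γ m * p + δ m := by
    simp only [e, map_add, map_nsmul, Finsupp.degree_single, smul_eq_mul, ← hγ, ← hγ']
    ring
  rcases hle.lt_or_eq with hlt | heq
  · rw [coeff_monomial_add_pow_of_lt hγ hT hqp (by linarith), if_neg]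
    intro h
    rw [h, map_nsmul, hγ, smul_eq_mul] at he
    omega
  obtain ⟨k, hk⟩ : ∃ k, γ m = k + 1 := Nat.exists_eq_add_one.mpr (by omega)
  rw [hk] at he heq
  rw [hk, coeff_monomial_add_pow_succ_of_degree_eq hγ hT hqp (by linarith), if_neg, mul_zero]
  intro h
  have hej := h j
  have hγj := congrArg (· j) hγ'
  simp only [e, Finsupp.coe_add, Finsupp.coe_smul, Pi.add_apply, Pi.smul_apply, smul_eq_mul,
    Finsupp.single_eq_same, mul_one] at hej hγj
  rw [hk, ← hγj] at hej
  rw [← hγj] at hj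
  have : k ≤ γ' j + δ m := by linarith
  omega

end DominantMonomial

end MvPolynomial

theorem Bisym.coeff_compRows_mapDomain_swap {K : Type*} [CommRing K] [IsDomain K] [Infinite K]
    {n : ℕ} {P : MvPolynomial (Fin n) K} (h : Bisym fun x => eval x P)
    (E : Fin n × Fin n →₀ ℕ) :
    coeff (E.mapDomain Prod.swap) (compRows P P) = coeff E (compRows P P) := by
  have hswap : rename Prod.swap (compRows P P) = compRows P P := by
    refine MvPolynomial.funext fun x => ?_
    rw [eval_rename, eval_compRows, eval_compRows]
    exact (h fun i k => x (i, k)).symm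
  conv_lhs => rw [← hswap]
  exact coeff_rename_mapDomain _ Prod.swap_injective _ _

theorem bisym_Pq_vanishes_general
    {K : Type*} [Field K] [CharZero K] {n p q : ℕ}
    (P : MvPolynomial (Fin n) K)
    (hbi : Bisym fun x : Fin n → K => MvPolynomial.eval x P)
    (hdeg : P.totalDegree = p)
    (c : K) (hc : c ≠ 0) (γ : Fin n →₀ ℕ) (hγ : ∑ i, γ i = p)
    (hPp : MvPolynomial.homogeneousComponent p P = MvPolynomial.monomial γ c)
    (hq : (P - MvPolynomial.homogeneousComponent p P).totalDegree = q) (hqp : q < p)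
    (j : Fin n) (hj1 : 0 < γ j) (hj2 : γ j < p - q) :
    MvPolynomial.homogeneousComponent q P = 0 := by
  classical
  set T := P - homogeneousComponent p P
  have hP : P = monomial γ c + T := by rw [← hPp, add_sub_cancel]
  have hγdeg : γ.degree = p := by rw [Finsupp.degree_eq_sum, hγ]
  obtain ⟨γ', hγ'⟩ : ∃ γ', γ' + Finsupp.single j 1 = γ :=
    ⟨γ - Finsupp.single j 1, tsub_add_cancel_of_le (Finsupp.single_le_iff.mpr hj1)⟩
  ext δ
  rw [coeff_homogeneousComponent, coeff_zero]
  refine ite_eq_right_iff.mpr fun hδ => ?_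
  have hδγ : δ ≠ γ := by rintro rfl; omega
  suffices coeff δ T = 0 by rwa [hP, coeff_add, coeff_monomial, if_neg hδγ.symm, zero_add]
  set E := Finsupp.vecMulVec γ' γ + Finsupp.vecMulVec (Finsupp.single j 1) δ
  have hE : q * p < E.degree := by
    have hγ'deg : γ'.degree + 1 = p := by rw [← hγdeg, ← hγ', map_add, Finsupp.degree_single]
    rw [map_add, Finsupp.degree_vecMulVec, Finsupp.degree_vecMulVec, Finsupp.degree_single,
      hγdeg, hδ]
    have hp : q + 2 ≤ p := by omega
    nlinarith
  have key := hbi.coeff_compRows_mapDomain_swap E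
  rw [hP] at key hdeg
  rw [coeff_compRows_monomial_add hdeg.le hq.le (by rwa [Finsupp.degree_mapDomain]),
    coeff_compRows_monomial_add hdeg.le hq.le hE, Finsupp.mapDomain_add,
    Finsupp.mapDomain_swap_vecMulVec, Finsupp.mapDomain_swap_vecMulVec,
    prod_coeff_pow_columns_eq_zero hγdeg hq.le hqp hγ' hδ hδγ hj2, mul_zero, zero_eq_mul,
    or_iff_right hc] at key
  exact coeff_eq_zero_of_prod_coeff_pow_rows_eq_zero hγdeg hq.le hqp hc hγ' hδ key

/-- If some exponent satisfies `0 < γ_j < p − q`, then `P_q = 0`. -/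
theorem bisym_Pq_vanishes
    {K : Type*} [Field K] [CharZero K] {n p q : ℕ}
    (P : MvPolynomial (Fin n) K)
    (hbi : Bisym fun x : Fin n → K => MvPolynomial.eval x P)
    (hdeg : P.totalDegree = p) (hp : 2 ≤ p)
    (c : K) (hc : c ≠ 0) (γ : Fin n →₀ ℕ) (hγ : ∑ i, γ i = p)
    (hPp : MvPolynomial.homogeneousComponent p P = MvPolynomial.monomial γ c)
    (hne : P ≠ MvPolynomial.homogeneousComponent p P)
    (hq : (P - MvPolynomial.homogeneousComponent p P).totalDegree = q) (hqp : q < p)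
    (j : Fin n) (hj1 : 0 < γ j) (hj2 : γ j < p - q) :
    MvPolynomial.homogeneousComponent q P = 0 :=
  bisym_Pq_vanishes_general P hbi hdeg c hc γ hγ hPp hq hqp j hj1 hj2
end

section
/- Let K be a field of characteristic zero and let P : K^n → K be a bisymmetric polynomial function of degree at most 2. Then P is univariate (P(x) = u(x_i) for some index i and univariate polynomial u), or P has degree ≤ 1, or there exist a, b ∈ K and α ∈ ℕ^n with |α| = 2 such that P(x) = a·∏_{i=1}^n (x_i + b)^{α_i} − b. -/
/-!
Write `P x = c + b ⬝ᵥ x + Q x` with `Q x = x ⬝ᵥ A *ᵥ x` and `A` symmetric. Bisymmetry applied to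
the rank-one matrices `u * y i * z j` is an identity between two quartics in `u`; their top three
coefficients give three relations between `b`, `c` and `Q`. If `Q ≠ 0`, some `0/1`-vector `z` has
`Q z ≠ 0`, and the `u⁴` relation becomes `Q y ^ 2 = μ * Q (y * y)` with `μ = Q z`. Evaluated on
sums of disjoint `0/1`-vectors this forces `Q x = μ * x k ^ 2` or `Q x = μ * x k * x l`. In the
first case the `u³` relation kills every `b m` with `m ≠ k`, so `P` depends on `x k` only. In the
second it forces `b = b k • (single k 1 + single l 1)`, and the `u²` relation gives
`μ * c = b k ^ 2 - b k`, which is exactly `P x = μ * (x k + β) * (x l + β) - β` with `β = b k / μ`.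
-/

open Matrix MvPolynomial

lemma isSymm_inv_two_smul_add_transpose {K ι : Type*} [Field K] (A : Matrix ι ι K) :
    ((2 : K)⁻¹ • (A + Aᵀ)).IsSymm := by
  simp [IsSymm, add_comm]

lemma dotProduct_single_mulVec {K ι : Type*} [CommRing K] [Fintype ι] [DecidableEq ι]
    (i j : ι) (c : K) (x y : ι → K) :
    x ⬝ᵥ single i j c *ᵥ y = x i * c * y j := by
  simp only [single_mulVec_eq, dotProduct_smul, dotProduct_single, smul_eq_mul]
  ring

section QuadraticFun

variable {K ι : Type*} [CommRing K] [Fintype ι]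

def quadraticFun (c : K) (b : ι → K) (A : Matrix ι ι K) (x : ι → K) : K :=
  c + b ⬝ᵥ x + x ⬝ᵥ A *ᵥ x

lemma quadraticFun_add (c c' : K) (b b' : ι → K) (A A' : Matrix ι ι K) :
    quadraticFun c b A + quadraticFun c' b' A' = quadraticFun (c + c') (b + b') (A + A') := by
  ext x
  simp only [quadraticFun, Pi.add_apply, add_dotProduct, add_mulVec, dotProduct_add]
  ring

lemma quadraticFun_smul (c : K) (b : ι → K) (A : Matrix ι ι K) (t : K) (x : ι → K) :
    quadraticFun c b A (t • x) = c + t * (b ⬝ᵥ x) + t ^ 2 * (x ⬝ᵥ A *ᵥ x) := by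
  simp only [quadraticFun, dotProduct_smul, mulVec_smul, smul_dotProduct, smul_eq_mul]
  ring

lemma Matrix.IsSymm.dotProduct_mulVec_comm {A : Matrix ι ι K} (hA : A.IsSymm) (x y : ι → K) :
    y ⬝ᵥ A *ᵥ x = x ⬝ᵥ A *ᵥ y := by
  rw [dotProduct_mulVec, ← mulVec_transpose, hA.eq, dotProduct_comm]

lemma dotProduct_mulVec_add_smul_add_sq_smul {A : Matrix ι ι K} (hA : A.IsSymm)
    (p v w : ι → K) (u : K) :
    (p + u • v + u ^ 2 • w) ⬝ᵥ A *ᵥ (p + u • v + u ^ 2 • w) =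
      p ⬝ᵥ A *ᵥ p + u * (2 * (p ⬝ᵥ A *ᵥ v)) + u ^ 2 * (v ⬝ᵥ A *ᵥ v + 2 * (p ⬝ᵥ A *ᵥ w))
        + u ^ 3 * (2 * (v ⬝ᵥ A *ᵥ w)) + u ^ 4 * (w ⬝ᵥ A *ᵥ w) := by
  simp only [add_dotProduct, dotProduct_add, mulVec_add, mulVec_smul, smul_dotProduct,
    dotProduct_smul, smul_eq_mul, hA.dotProduct_mulVec_comm p v, hA.dotProduct_mulVec_comm p w,
    hA.dotProduct_mulVec_comm v w]
  ring

lemma quadraticFun_add_smul_add_sq_smul {A : Matrix ι ι K} (hA : A.IsSymm) (c : K) (b : ι → K)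
    (p v w : ι → K) (u : K) :
    quadraticFun c b A (p + u • v + u ^ 2 • w) =
      quadraticFun c b A p + u * (b ⬝ᵥ v + 2 * (p ⬝ᵥ A *ᵥ v))
        + u ^ 2 * (b ⬝ᵥ w + v ⬝ᵥ A *ᵥ v + 2 * (p ⬝ᵥ A *ᵥ w))
        + u ^ 3 * (2 * (v ⬝ᵥ A *ᵥ w)) + u ^ 4 * (w ⬝ᵥ A *ᵥ w) := by
  simp only [quadraticFun, dotProduct_mulVec_add_smul_add_sq_smul hA, dotProduct_add,
    dotProduct_smul, smul_eq_mul]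
  ring

end QuadraticFun

lemma quadraticFun_eq_symmetrize {K ι : Type*} [Field K] [CharZero K] [Fintype ι] (c : K)
    (b : ι → K) (A : Matrix ι ι K) :
    quadraticFun c b A = quadraticFun c b ((2 : K)⁻¹ • (A + Aᵀ)) := by
  ext x
  have htranspose : x ⬝ᵥ Aᵀ *ᵥ x = x ⬝ᵥ A *ᵥ x := by
    rw [mulVec_transpose, dotProduct_comm, dotProduct_mulVec]
  simp only [quadraticFun, smul_mulVec, add_mulVec, dotProduct_smul, dotProduct_add,
    htranspose, smul_eq_mul]
  ring

section Polynomial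

lemma Finsupp.eq_zero_or_eq_single_or_eq_single_add_single {ι : Type*} [DecidableEq ι]
    {v : ι →₀ ℕ} (hv : v.degree ≤ 2) :
    v = 0 ∨ (∃ k, v = Finsupp.single k 1) ∨ ∃ k l, v = Finsupp.single k 1 + Finsupp.single l 1 := by
  have hcard : Multiset.card v.toMultiset ≤ 2 := (Finsupp.card_toMultiset v).trans_le hv
  have hv : v = Multiset.toFinsupp v.toMultiset := (Multiset.toFinsupp_eq_iff.2 rfl).symm
  interval_cases h : Multiset.card v.toMultiset
  · exact .inl (by rw [hv, Multiset.card_eq_zero.1 h, Multiset.toFinsupp_zero])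
  · obtain ⟨k, hk⟩ := Multiset.card_eq_one.1 h
    exact .inr (.inl ⟨k, by rw [hv, hk, Multiset.toFinsupp_singleton]⟩)
  · obtain ⟨k, l, hkl⟩ := Multiset.card_eq_two.1 h
    refine .inr (.inr ⟨k, l, ?_⟩)
    rw [hv, hkl, Multiset.insert_eq_cons, ← Multiset.singleton_add, Multiset.toFinsupp_add,
      Multiset.toFinsupp_singleton, Multiset.toFinsupp_singleton]

lemma totalDegree_le_one_of_eval_eq {ι R : Type*} [Fintype ι] [CommRing R] [IsDomain R]
    [Infinite R] {P : MvPolynomial ι R} {c : R} {b : ι → R} (h : ∀ x, eval x P = c + b ⬝ᵥ x) :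
    P.totalDegree ≤ 1 := by
  have hP : P = C c + ∑ i, C (b i) * X i :=
    MvPolynomial.funext fun x => by simp [h, dotProduct]
  rw [hP]
  refine (totalDegree_add _ _).trans (max_le (by simp) (totalDegree_finsetSum_le fun i _ => ?_))
  exact (totalDegree_mul _ _).trans (by simp [totalDegree_X])

variable {K ι : Type*} [CommRing K] [Fintype ι] [DecidableEq ι]

lemma exists_quadraticFun_eq_eval_monomial {v : ι →₀ ℕ} (hv : v.degree ≤ 2) (a : K) :
    ∃ c b A, (fun x => eval x (monomial v a)) = quadraticFun c b A := by
  rcases Finsupp.eq_zero_or_eq_single_or_eq_single_add_single hv with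
    rfl | ⟨k, rfl⟩ | ⟨k, l, rfl⟩
  · exact ⟨a, 0, 0, by ext x; simp [quadraticFun]⟩
  · exact ⟨0, Pi.single k a, 0, by ext x; simp [quadraticFun, eval_monomial, single_dotProduct]⟩
  · refine ⟨0, 0, single k l a, ?_⟩
    ext x
    simp only [quadraticFun, eval_monomial, Finsupp.prod_add_index', Finsupp.prod_single_index,
      pow_add, pow_one, pow_zero, implies_true, zero_dotProduct, dotProduct_single_mulVec,
      add_zero, zero_add]
    ring

lemma exists_quadraticFun_eq_eval {P : MvPolynomial ι K} (hP : P.totalDegree ≤ 2) :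
    ∃ c b A, (fun x => eval x P) = quadraticFun c b A := by
  have hsum : (fun x => eval x P) =
      ∑ v ∈ P.support, fun x => eval x (monomial v (coeff v P)) := by
    ext x
    rw [Finset.sum_apply, ← map_sum, ← P.as_sum]
  rw [hsum]
  refine Finset.sum_induction _ (fun f => ∃ c b A, f = quadraticFun c b A) ?_ ⟨0, 0, 0, ?_⟩ ?_
  · rintro _ _ ⟨c, b, A, rfl⟩ ⟨c', b', A', rfl⟩
    exact ⟨_, _, _, quadraticFun_add c c' b b' A A'⟩
  · ext x
    simp [quadraticFun]
  · exact fun v hv => exists_quadraticFun_eq_eval_monomial ((le_totalDegree hv).trans hP) _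

end Polynomial

lemma exists_isSymm_quadraticFun_eq_eval {K ι : Type*} [Field K] [CharZero K] [Fintype ι]
    [DecidableEq ι] {P : MvPolynomial ι K} (hP : P.totalDegree ≤ 2) :
    ∃ c b A, A.IsSymm ∧ (fun x => eval x P) = quadraticFun c b A := by
  obtain ⟨c, b, A, h⟩ := exists_quadraticFun_eq_eval hP
  exact ⟨c, b, _, isSymm_inv_two_smul_add_transpose A, h.trans (quadraticFun_eq_symmetrize c b A)⟩

lemma quartic_coeffs_eq {K : Type*} [Field K] [CharZero K] {a₀ a₁ a₂ a₃ a₄ b₀ b₁ b₂ b₃ b₄ : K}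
    (h : ∀ u : K, a₀ + u * a₁ + u ^ 2 * a₂ + u ^ 3 * a₃ + u ^ 4 * a₄ =
      b₀ + u * b₁ + u ^ 2 * b₂ + u ^ 3 * b₃ + u ^ 4 * b₄) :
    a₀ = b₀ ∧ a₁ = b₁ ∧ a₂ = b₂ ∧ a₃ = b₃ ∧ a₄ = b₄ := by
  have h₀ := h 0
  have h₁ := h 1
  have h₂ := h 2
  have hm₁ := h (-1)
  have hm₂ := h (-2)
  refine ⟨by linear_combination h₀, ?_, ?_, ?_, ?_⟩
  · linear_combination (8 * (h₁ - hm₁) - (h₂ - hm₂)) / 12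
  · linear_combination (16 * (h₁ + hm₁) - (h₂ + hm₂) - 30 * h₀) / 24
  · linear_combination ((h₂ - hm₂) - 2 * (h₁ - hm₁)) / 12
  · linear_combination ((h₂ + hm₂) - 4 * (h₁ + hm₁) + 6 * h₀) / 24

section IndicatorVec

variable {K ι : Type*} [CommRing K] [DecidableEq ι]

def indicatorVec (s : Finset ι) : ι → K := fun i => if i ∈ s then 1 else 0

@[simp]
lemma indicatorVec_apply (s : Finset ι) (i : ι) :
    (indicatorVec s i : K) = if i ∈ s then 1 else 0 := rfl

lemma indicatorVec_mul (s t : Finset ι) :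
    (indicatorVec s * indicatorVec t : ι → K) = indicatorVec (s ∩ t) := by
  ext i
  by_cases hs : i ∈ s <;> by_cases ht : i ∈ t <;> simp [hs, ht]

variable [Fintype ι]

lemma dotProduct_indicatorVec (v : ι → K) (s : Finset ι) :
    v ⬝ᵥ indicatorVec s = ∑ i ∈ s, v i := by
  simp [dotProduct, mul_ite, Finset.sum_ite_mem]

lemma indicatorVec_dotProduct_mulVec (A : Matrix ι ι K) (s t : Finset ι) :
    indicatorVec s ⬝ᵥ A *ᵥ indicatorVec t = ∑ p ∈ s, ∑ q ∈ t, A p q := by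
  simp [dotProduct, mulVec, ite_mul, mul_ite, Finset.sum_ite_mem]

end IndicatorVec

section SquareIdentity

variable {K ι : Type*} [Field K] [Fintype ι] {A : Matrix ι ι K} {μ : K}

/-- The coefficients of `u` and `u ^ 2` in `hsq` along the line `a + u • b`. -/
lemma relations_of_sq_eq_of_mul_eq_zero [CharZero K] (hA : A.IsSymm)
    (hsq : ∀ y, (y ⬝ᵥ A *ᵥ y) ^ 2 = μ * ((y * y) ⬝ᵥ A *ᵥ (y * y)))
    {a b : ι → K} (hab : a * b = 0) :
    (a ⬝ᵥ A *ᵥ a) * (a ⬝ᵥ A *ᵥ b) = 0 ∧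
      2 * (a ⬝ᵥ A *ᵥ b) ^ 2 + (a ⬝ᵥ A *ᵥ a) * (b ⬝ᵥ A *ᵥ b) =
        μ * ((a * a) ⬝ᵥ A *ᵥ (b * b)) := by
  have hline : ∀ u : K, (a + u • b + u ^ 2 • 0) * (a + u • b + u ^ 2 • 0) =
      a * a + u • 0 + u ^ 2 • (b * b) := by
    intro u
    ext i
    have hi := congrFun hab i
    simp only [Pi.mul_apply, Pi.add_apply, Pi.smul_apply, smul_eq_mul, Pi.zero_apply] at hi ⊢
    linear_combination (2 * u) * hi
  obtain ⟨-, h₁, h₂, -, -⟩ := quartic_coeffs_eq (a₀ := (a ⬝ᵥ A *ᵥ a) ^ 2)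
    (a₁ := 4 * (a ⬝ᵥ A *ᵥ a) * (a ⬝ᵥ A *ᵥ b))
    (a₂ := 4 * (a ⬝ᵥ A *ᵥ b) ^ 2 + 2 * (a ⬝ᵥ A *ᵥ a) * (b ⬝ᵥ A *ᵥ b))
    (a₃ := 4 * (a ⬝ᵥ A *ᵥ b) * (b ⬝ᵥ A *ᵥ b)) (a₄ := (b ⬝ᵥ A *ᵥ b) ^ 2)
    (b₀ := μ * ((a * a) ⬝ᵥ A *ᵥ (a * a))) (b₁ := 0)
    (b₂ := μ * (2 * ((a * a) ⬝ᵥ A *ᵥ (b * b)))) (b₃ := 0)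
    (b₄ := μ * ((b * b) ⬝ᵥ A *ᵥ (b * b))) fun u => by
      have h := hsq (a + u • b + u ^ 2 • 0)
      rw [hline, dotProduct_mulVec_add_smul_add_sq_smul hA,
        dotProduct_mulVec_add_smul_add_sq_smul hA] at h
      simp only [dotProduct_zero, zero_dotProduct, mulVec_zero, mul_zero, add_zero,
        zero_add] at h
      linear_combination h
  exact ⟨by linear_combination h₁ / 4, by linear_combination h₂ / 2⟩

variable [DecidableEq ι]

lemma sq_diag_eq_of_sq_eq (hsq : ∀ y, (y ⬝ᵥ A *ᵥ y) ^ 2 = μ * ((y * y) ⬝ᵥ A *ᵥ (y * y)))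
    (k : ι) : A k k ^ 2 = μ * A k k := by
  simpa [indicatorVec_mul, indicatorVec_dotProduct_mulVec] using hsq (indicatorVec {k})

variable [CharZero K]

lemma relations_of_sq_eq_of_disjoint (hA : A.IsSymm)
    (hsq : ∀ y, (y ⬝ᵥ A *ᵥ y) ^ 2 = μ * ((y * y) ⬝ᵥ A *ᵥ (y * y)))
    {s t : Finset ι} (hst : Disjoint s t) :
    (∑ p ∈ s, ∑ q ∈ s, A p q) * (∑ p ∈ s, ∑ q ∈ t, A p q) = 0 ∧
      2 * (∑ p ∈ s, ∑ q ∈ t, A p q) ^ 2 + (∑ p ∈ s, ∑ q ∈ s, A p q) * (∑ p ∈ t, ∑ q ∈ t, A p q)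
        = μ * ∑ p ∈ s, ∑ q ∈ t, A p q := by
  have hst' : (indicatorVec s * indicatorVec t : ι → K) = 0 := by
    rw [indicatorVec_mul, Finset.disjoint_iff_inter_eq_empty.1 hst]
    ext i
    simp
  simpa only [indicatorVec_mul, Finset.inter_self, indicatorVec_dotProduct_mulVec] using
    relations_of_sq_eq_of_mul_eq_zero hA hsq hst'

lemma eq_single_of_sq_eq (hA : A.IsSymm)
    (hsq : ∀ y, (y ⬝ᵥ A *ᵥ y) ^ 2 = μ * ((y * y) ⬝ᵥ A *ᵥ (y * y))) {k : ι} (hk : A k k ≠ 0) :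
    A = single k k μ := by
  have hrel := fun {s t : Finset ι} (hst : Disjoint s t) =>
    relations_of_sq_eq_of_disjoint hA hsq hst
  have hkk : A k k = μ := mul_left_cancel₀ hk (by linear_combination sq_diag_eq_of_sq_eq hsq k)
  have hrow : ∀ l ≠ k, A k l = 0 := fun l hl => by
    simpa [hk] using (hrel (s := {k}) (t := {l}) (by simpa using hl.symm)).1
  have hdiag : ∀ l ≠ k, A l l = 0 := fun l hl => by
    have h := (hrel (s := {k}) (t := {l}) (by simpa using hl.symm)).2
    simp only [Finset.sum_singleton, hrow l hl] at h
    simpa [hk] using h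
  have hoff : ∀ l m, l ≠ k → m ≠ k → l ≠ m → A l m = 0 := fun l m hl hm hlm => by
    have h := (hrel (s := {k}) (t := {l, m}) (by simp [hl.symm, hm.symm])).2
    simp only [Finset.sum_singleton, Finset.sum_pair hlm, hrow l hl, hrow m hm, hdiag l hl,
      hdiag m hm, hA.apply l m] at h
    simpa [hk] using h
  ext p q
  rcases eq_or_ne p k with rfl | hp <;> rcases eq_or_ne q p with rfl | hqp
  · simp [hkk]
  · simp [hrow q hqp, single_apply_of_col_ne _ _ hqp.symm]
  · simp [hdiag q hp, single_apply_of_row_ne hp.symm]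
  · rcases eq_or_ne q k with rfl | hq
    · simp [hA.apply q p, hrow p hp, single_apply_of_row_ne hp.symm]
    · simp [hoff p q hp hq hqp.symm, single_apply_of_row_ne hp.symm]

lemma two_mul_eq_of_sq_eq_of_diag_eq_zero (hA : A.IsSymm)
    (hsq : ∀ y, (y ⬝ᵥ A *ᵥ y) ^ 2 = μ * ((y * y) ⬝ᵥ A *ᵥ (y * y))) (hdiag : ∀ p, A p p = 0)
    {k l : ι} (hkl : A k l ≠ 0) :
    2 * A k l = μ := by
  have hne : k ≠ l := fun h => hkl (h ▸ hdiag k)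
  refine mul_left_cancel₀ hkl ?_
  have h := (relations_of_sq_eq_of_disjoint (s := {k}) (t := {l}) hA hsq
    (by simpa using hne)).2
  simp only [Finset.sum_singleton, hdiag, mul_zero, add_zero] at h
  linear_combination h

lemma apply_eq_zero_of_sq_eq_of_diag_eq_zero (hA : A.IsSymm)
    (hsq : ∀ y, (y ⬝ᵥ A *ᵥ y) ^ 2 = μ * ((y * y) ⬝ᵥ A *ᵥ (y * y))) (hdiag : ∀ p, A p p = 0)
    {k l : ι} (hkl : A k l ≠ 0) {m : ι} (hmk : m ≠ k) (hml : m ≠ l) :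
    A k m = 0 ∧ A l m = 0 := by
  have hne : k ≠ l := fun h => hkl (h ▸ hdiag k)
  have hμ := two_mul_eq_of_sq_eq_of_diag_eq_zero hA hsq hdiag hkl
  have hrel := fun {s t : Finset ι} (hst : Disjoint s t) =>
    relations_of_sq_eq_of_disjoint hA hsq hst
  have hsum := (hrel (s := {k, l}) (t := {m}) (by simp [hmk, hml])).1
  have hkm := (hrel (s := {k}) (t := {m}) (by simpa using hmk.symm)).2
  have hlm := (hrel (s := {l}) (t := {m}) (by simpa using hml.symm)).2
  simp only [Finset.sum_singleton, Finset.sum_pair hne, hdiag, hA.apply k l] at hsum hkm hlm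
  have hsum' : A k m + A l m = 0 := by simpa [hkl] using hsum
  have hdiff : A k m - A l m = 0 := by
    refine (mul_eq_zero.1 (?_ : 2 * A k l * (A k m - A l m) = 0)).resolve_left
      (mul_ne_zero two_ne_zero hkl)
    linear_combination (A k m - A l m) * hμ - hkm + hlm + 2 * (A k m - A l m) * hsum'
  exact ⟨by linear_combination (hsum' + hdiff) / 2, by linear_combination (hsum' - hdiff) / 2⟩

lemma eq_single_add_single_of_sq_eq (hA : A.IsSymm)
    (hsq : ∀ y, (y ⬝ᵥ A *ᵥ y) ^ 2 = μ * ((y * y) ⬝ᵥ A *ᵥ (y * y))) (hdiag : ∀ p, A p p = 0)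
    {k l : ι} (hkl : A k l ≠ 0) :
    A = single k l (μ / 2) + single l k (μ / 2) := by
  have hne : k ≠ l := fun h => hkl (h ▸ hdiag k)
  have hμ := two_mul_eq_of_sq_eq_of_diag_eq_zero hA hsq hdiag hkl
  have hout := fun {m} => apply_eq_zero_of_sq_eq_of_diag_eq_zero hA hsq hdiag hkl (m := m)
  have hrest : ∀ m p, m ≠ k → m ≠ l → p ≠ k → p ≠ l → m ≠ p → A m p = 0 :=
    fun m p hmk hml hpk hpl hmp => by
      have h := (relations_of_sq_eq_of_disjoint (s := {k, l}) (t := {m, p}) hA hsq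
        (by simp [*, Ne.symm])).2
      simp only [Finset.sum_pair hne, Finset.sum_pair hmp, hdiag, hA.apply k l, hA.apply m p,
        (hout hmk hml).1, (hout hmk hml).2, (hout hpk hpl).1, (hout hpk hpl).2] at h
      simpa [hkl] using h
  ext p q
  by_cases hkl' : p = k ∧ q = l
  · obtain ⟨rfl, rfl⟩ := hkl'
    simp [hne, ← hμ]
  by_cases hlk' : p = l ∧ q = k
  · obtain ⟨rfl, rfl⟩ := hlk'
    simp [hne, ← hμ, hA.apply p q]
  have hsingle : (single k l (μ / 2) + single l k (μ / 2)) p q = 0 := by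
    have hkl'' : ¬(k = p ∧ l = q) := fun h => hkl' ⟨h.1.symm, h.2.symm⟩
    have hlk'' : ¬(l = p ∧ k = q) := fun h => hlk' ⟨h.1.symm, h.2.symm⟩
    simp [hkl'', hlk'']
  rw [hsingle]
  rcases eq_or_ne p q with rfl | hpq
  · exact hdiag p
  by_cases hp : p = k ∨ p = l
  · rcases hp with rfl | rfl
    · exact (hout hpq.symm fun h => hkl' ⟨rfl, h⟩).1
    · exact (hout (fun h => hlk' ⟨rfl, h⟩) hpq.symm).2
  push Not at hp
  by_cases hq : q = k ∨ q = l
  · rcases hq with rfl | rfl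
    · rw [← hA.apply]; exact (hout hp.1 hp.2).1
    · rw [← hA.apply]; exact (hout hp.1 hp.2).2
  push Not at hq
  exact hrest p q hp.1 hp.2 hq.1 hq.2 hpq

lemma eq_zero_or_eq_single_or_eq_single_add_single_of_sq_eq (hA : A.IsSymm)
    (hsq : ∀ y, (y ⬝ᵥ A *ᵥ y) ^ 2 = μ * ((y * y) ⬝ᵥ A *ᵥ (y * y))) :
    A = 0 ∨ (∃ k, A = single k k μ) ∨
      ∃ k l, k ≠ l ∧ A = single k l (μ / 2) + single l k (μ / 2) := by
  by_cases hdiag : ∃ k, A k k ≠ 0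
  · obtain ⟨k, hk⟩ := hdiag
    exact .inr (.inl ⟨k, eq_single_of_sq_eq hA hsq hk⟩)
  push Not at hdiag
  by_cases hA0 : A = 0
  · exact .inl hA0
  obtain ⟨k, l, hkl⟩ : ∃ k l, A k l ≠ 0 := by
    by_contra! h
    exact hA0 (Matrix.ext h)
  exact .inr (.inr ⟨k, l, fun h => hkl (h ▸ hdiag k),
    eq_single_add_single_of_sq_eq hA hsq hdiag hkl⟩)

lemma exists_mul_self_eq_and_dotProduct_mulVec_ne_zero (hA : A.IsSymm) (hA0 : A ≠ 0) :
    ∃ z : ι → K, z * z = z ∧ z ⬝ᵥ A *ᵥ z ≠ 0 := by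
  by_contra! h
  have hQ : ∀ s : Finset ι, ∑ p ∈ s, ∑ q ∈ s, A p q = 0 := fun s => by
    simpa [indicatorVec_dotProduct_mulVec] using
      h (indicatorVec s) (by rw [indicatorVec_mul, Finset.inter_self])
  have hdiag : ∀ p, A p p = 0 := fun p => by simpa using hQ {p}
  refine hA0 (Matrix.ext fun p q => ?_)
  rcases eq_or_ne p q with rfl | hpq
  · exact hdiag p
  · have h := hQ {p, q}
    simp only [Finset.sum_pair hpq, hA.apply p q, hdiag] at h
    simpa using h

end SquareIdentity

namespace Bisym

variable {K : Type*} [Field K] [CharZero K] {n : ℕ} {c : K} {b : Fin n → K}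
  {A : Matrix (Fin n) (Fin n) K} {μ : K}

lemma quadraticFun_relations (hA : A.IsSymm) (hf : Bisym (quadraticFun c b A))
    (y z : Fin n → K) :
    (z ⬝ᵥ A *ᵥ z) ^ 2 * ((y * y) ⬝ᵥ A *ᵥ (y * y)) =
        (y ⬝ᵥ A *ᵥ y) ^ 2 * ((z * z) ⬝ᵥ A *ᵥ (z * z)) ∧
      b ⬝ᵥ z * (z ⬝ᵥ A *ᵥ z) * (y ⬝ᵥ A *ᵥ (y * y)) =
        b ⬝ᵥ y * (y ⬝ᵥ A *ᵥ y) * (z ⬝ᵥ A *ᵥ (z * z)) ∧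
      (z ⬝ᵥ A *ᵥ z) * (b ⬝ᵥ (y * y)) + (b ⬝ᵥ z) ^ 2 * (y ⬝ᵥ A *ᵥ y)
          + 2 * c * (z ⬝ᵥ A *ᵥ z) * (1 ⬝ᵥ A *ᵥ (y * y)) =
        (y ⬝ᵥ A *ᵥ y) * (b ⬝ᵥ (z * z)) + (b ⬝ᵥ y) ^ 2 * (z ⬝ᵥ A *ᵥ z)
          + 2 * c * (y ⬝ᵥ A *ᵥ y) * (1 ⬝ᵥ A *ᵥ (z * z)) := by
  have hrows : ∀ (u : K) (y z : Fin n → K),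
      (fun i => quadraticFun c b A fun j => u * y i * z j) =
        c • 1 + u • ((b ⬝ᵥ z) • y) + u ^ 2 • ((z ⬝ᵥ A *ᵥ z) • (y * y)) := by
    intro u y z
    ext i
    rw [show (fun j => u * y i * z j) = (u * y i) • z from rfl, quadraticFun_smul]
    simp only [Pi.add_apply, Pi.smul_apply, Pi.mul_apply, Pi.one_apply, smul_eq_mul]
    ring
  have hrank_one : ∀ u : K,
      quadraticFun c b A (c • 1 + u • ((b ⬝ᵥ z) • y) + u ^ 2 • ((z ⬝ᵥ A *ᵥ z) • (y * y))) =
        quadraticFun c b A (c • 1 + u • ((b ⬝ᵥ y) • z) + u ^ 2 • ((y ⬝ᵥ A *ᵥ y) • (z * z))) := by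
    intro u
    rw [← hrows, ← hrows, hf]
    simp only [mul_right_comm]
  obtain ⟨-, -, h₂, h₃, h₄⟩ := quartic_coeffs_eq fun u =>
    (quadraticFun_add_smul_add_sq_smul hA ..).symm.trans
      ((hrank_one u).trans (quadraticFun_add_smul_add_sq_smul hA ..))
  simp only [smul_dotProduct, dotProduct_smul, mulVec_smul, smul_eq_mul] at h₂ h₃ h₄
  exact ⟨by linear_combination h₄, by linear_combination h₃ / 2, by linear_combination h₂⟩

lemma exists_sq_dotProduct_mulVec_eq (hA : A.IsSymm) (hf : Bisym (quadraticFun c b A))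
    (hA0 : A ≠ 0) :
    ∃ μ ≠ 0, ∀ y, (y ⬝ᵥ A *ᵥ y) ^ 2 = μ * ((y * y) ⬝ᵥ A *ᵥ (y * y)) := by
  obtain ⟨z, hz, hQz⟩ := exists_mul_self_eq_and_dotProduct_mulVec_ne_zero hA hA0
  refine ⟨z ⬝ᵥ A *ᵥ z, hQz, fun y => mul_left_cancel₀ hQz ?_⟩
  have h := (hf.quadraticFun_relations hA y z).1
  rw [hz] at h
  linear_combination -h

lemma quadraticFun_eq_of_eq_single (hA : A.IsSymm) (hf : Bisym (quadraticFun c b A))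
    (hμ : μ ≠ 0) {k : Fin n} (hAk : A = single k k μ) (x : Fin n → K) :
    quadraticFun c b A x = c + b k * x k + μ * x k ^ 2 := by
  have hb : b = Pi.single k (b k) := by
    ext l
    rcases eq_or_ne l k with rfl | hl
    · simp
    have h := (hf.quadraticFun_relations hA (indicatorVec {k, l}) (indicatorVec {k})).2.1
    simp only [indicatorVec_mul, Finset.inter_self, hAk, dotProduct_single_mulVec,
      dotProduct_indicatorVec, Finset.sum_pair hl.symm, indicatorVec_apply] at h
    simpa [hl, hμ] using h
  rw [quadraticFun, hAk, dotProduct_single_mulVec, hb, single_dotProduct, Pi.single_eq_same]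
  ring

section OffDiagonal

variable {k l : Fin n}

lemma eq_pi_single_add_pi_single_of_eq_single_add_single (hA : A.IsSymm)
    (hf : Bisym (quadraticFun c b A)) (hμ : μ ≠ 0) (hkl : k ≠ l)
    (hAkl : A = single k l (μ / 2) + single l k (μ / 2)) :
    b = Pi.single k (b k) + Pi.single l (b k) := by
  have hQ : ∀ x y : Fin n → K, x ⬝ᵥ A *ᵥ y = μ / 2 * (x k * y l + x l * y k) := fun x y => by
    rw [hAkl, add_mulVec, dotProduct_add, dotProduct_single_mulVec, dotProduct_single_mulVec]
    ring
  have hrel := fun y z => (hf.quadraticFun_relations hA y z).2.1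
  have hbl : b l = b k := by
    have h := hrel (Pi.single k 1 + Pi.single l 2) (indicatorVec {k, l})
    simp only [hQ, indicatorVec_mul, Finset.inter_self, dotProduct_indicatorVec, dotProduct_add,
      dotProduct_single, Finset.sum_pair hkl, indicatorVec_apply, Finset.mem_insert,
      Finset.mem_singleton, Pi.add_apply, Pi.mul_apply, Pi.single_eq_same, Pi.single_eq_of_ne hkl,
      Pi.single_eq_of_ne hkl.symm, hkl, hkl.symm, or_false, or_true, if_true, mul_one, one_mul,
      add_zero, zero_add] at h
    have h' : μ ^ 2 * (b k - b l) = 0 := by linear_combination h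
    exact (sub_eq_zero.1 ((mul_eq_zero.1 h').resolve_left (pow_ne_zero 2 hμ))).symm
  ext m
  rcases eq_or_ne m k with rfl | hmk
  · simp [hkl]
  rcases eq_or_ne m l with rfl | hml
  · simp [hkl.symm, hbl]
  have h := hrel (indicatorVec {k, l, m}) (indicatorVec {k, l})
  simp only [indicatorVec_mul, Finset.inter_self, hQ, dotProduct_indicatorVec,
    indicatorVec_apply] at h
  simpa [hkl, hmk, hml, hmk.symm, hml.symm, hμ] using h

lemma add_mul_eq_sq_of_eq_single_add_single (hA : A.IsSymm)
    (hf : Bisym (quadraticFun c b A)) (hμ : μ ≠ 0) (hkl : k ≠ l)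
    (hAkl : A = single k l (μ / 2) + single l k (μ / 2)) :
    b k + c * μ = b k ^ 2 := by
  have hb := eq_pi_single_add_pi_single_of_eq_single_add_single hA hf hμ hkl hAkl
  have h := (hf.quadraticFun_relations hA (indicatorVec {k}) (indicatorVec {k, l})).2.2
  rw [hb] at h
  simp only [hAkl, add_mulVec, dotProduct_add, dotProduct_single_mulVec, indicatorVec_mul,
    Finset.inter_self, dotProduct_indicatorVec, Finset.sum_singleton, Finset.sum_pair hkl,
    indicatorVec_apply, Finset.mem_insert, Finset.mem_singleton, Pi.add_apply, Pi.one_apply,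
    Pi.single_eq_same, Pi.single_eq_of_ne hkl, Pi.single_eq_of_ne hkl.symm, hkl, hkl.symm,
    or_false, or_true, if_true, if_false, mul_one, one_mul, mul_zero, zero_mul, add_zero,
    zero_add, add_halves] at h
  exact mul_left_cancel₀ hμ (by linear_combination h)

lemma quadraticFun_eq_of_eq_single_add_single (hA : A.IsSymm)
    (hf : Bisym (quadraticFun c b A)) (hμ : μ ≠ 0) (hkl : k ≠ l)
    (hAkl : A = single k l (μ / 2) + single l k (μ / 2)) (x : Fin n → K) :
    quadraticFun c b A x = μ * ((x k + b k / μ) * (x l + b k / μ)) - b k / μ := by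
  have hc := add_mul_eq_sq_of_eq_single_add_single hA hf hμ hkl hAkl
  have hbx : b ⬝ᵥ x = b k * x k + b k * x l := by
    conv_lhs => rw [eq_pi_single_add_pi_single_of_eq_single_add_single hA hf hμ hkl hAkl,
      add_dotProduct, single_dotProduct, single_dotProduct]
  rw [quadraticFun, hbx, hAkl, add_mulVec, dotProduct_add, dotProduct_single_mulVec,
    dotProduct_single_mulVec]
  field_simp
  linear_combination 2 * hc

end OffDiagonal

end Bisym

lemma prod_pow_single_add_single {M ι : Type*} [CommMonoid M] [Fintype ι] [DecidableEq ι]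
    (g : ι → M) (k l : ι) :
    ∏ i, g i ^ (Pi.single k 1 + Pi.single l 1 : ι → ℕ) i = g k * g l := by
  simp only [Pi.add_apply, pow_add, Finset.prod_mul_distrib, Pi.single_apply, pow_ite, pow_one,
    pow_zero, Finset.prod_ite_eq', Finset.mem_univ, if_true]

/-- The Main Theorem for bisymmetric polynomial functions of degree at most 2 over a
field of characteristic zero. -/
theorem bisym_deg_le_two
    {K : Type*} [Field K] [CharZero K] {n : ℕ}
    (P : MvPolynomial (Fin n) K)
    (hbi : Bisym fun x : Fin n → K => MvPolynomial.eval x P)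
    (hdeg : P.totalDegree ≤ 2) :
    (∃ i : Fin n, ∃ u : Polynomial K,
        ∀ x : Fin n → K, MvPolynomial.eval x P = u.eval (x i)) ∨
    P.totalDegree ≤ 1 ∨
    (∃ a b : K, ∃ α : Fin n → ℕ, (∑ i, α i = 2) ∧
        ∀ x : Fin n → K,
          MvPolynomial.eval x P = a * (∏ i, (x i + b) ^ α i) - b) := by
  obtain ⟨c, b, A, hA, hP⟩ := exists_isSymm_quadraticFun_eq_eval hdeg
  rw [hP] at hbi
  simp only [funext_iff] at hP
  by_cases hA0 : A = 0
  · exact .inr (.inl (totalDegree_le_one_of_eval_eq (c := c) (b := b) fun x => by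
      simp [hP, quadraticFun, hA0]))
  obtain ⟨μ, hμ, hsq⟩ := hbi.exists_sq_dotProduct_mulVec_eq hA hA0
  rcases eq_zero_or_eq_single_or_eq_single_add_single_of_sq_eq hA hsq with
    hA0' | ⟨k, hk⟩ | ⟨k, l, hkl, hkl'⟩
  · exact absurd hA0' hA0
  · refine .inl ⟨k, .C c + .C (b k) * .X + .C μ * .X ^ 2, fun x => ?_⟩
    rw [hP, hbi.quadraticFun_eq_of_eq_single hA hμ hk]
    simp
  · refine .inr (.inr ⟨μ, b k / μ, Pi.single k 1 + Pi.single l 1,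
      by simp [Finset.sum_add_distrib], fun x => ?_⟩)
    rw [hP, hbi.quadraticFun_eq_of_eq_single_add_single hA hμ hkl hkl',
      prod_pow_single_add_single]
end

section
/- Let S be a set, let n ≥ 2, and let f : S^n → S be bisymmetric. Then the function I_{1,2}f : S^{n−1} → S defined by (I_{1,2}f)(x_1,…,x_{n−1}) = f(x_1, x_1, x_2, …, x_{n−1}), obtained by identifying the first two variables, is bisymmetric. -/
/-- Bisymmetry is preserved under identification of the first two variables. -/
theorem bisym_identification
    {S : Type*} {n : ℕ} (hn : 2 ≤ n) (f : (Fin n → S) → S) (hf : Bisym f) :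
    Bisym (fun x : Fin (n - 1) → S =>
      f fun j : Fin n => x ⟨j.val - 1, by have := j.isLt; omega⟩) := by
  intro X
  exact hf (fun i j => X ⟨i.val - 1, by have := i.isLt; omega⟩
    ⟨j.val - 1, by have := j.isLt; omega⟩)
end
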